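/- arXiv:1602.04117 — 6 statements merged into one kernel-verified Lean document; each statement's English description precedes it below -/
import Mathlib

section
/- Let p ∈ ℝ^{k+1} with ‖p‖ ≤ 1 and let a > 0 with ‖p‖² ≥ 1/a. Then C(p,a) is contained in the positive cone over B_{ε(p,a)}(p): for every q ∈ C(p,a) there exists t > 0 such that ‖t·q − p‖ < ε(p,a). -/
/-- The confidence set `C(p,a) = {q : ‖q‖ ≤ 1 ∧ ‖p−q‖² < (1−‖q‖²)/a}`. -/
def confSet {k : ℕ} (p : EuclideanSpace ℝ (Fin (k + 1))) (a : ℝ) :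
    Set (EuclideanSpace ℝ (Fin (k + 1))) :=
  {q | ‖q‖ ≤ 1 ∧ ‖p - q‖ ^ 2 < (1 - ‖q‖ ^ 2) / a}

/-- for `‖p‖ ≤ 1` and `a > 0` with `‖p‖² ≥ 1/a`, the set `C(p,a)` is
contained in the positive cone over the open ball `B_{ε(p,a)}(p)` with
`ε(p,a) = √((1/a)(1−‖p‖²+1/a))`: every `q ∈ C(p,a)` has a positive multiple lying in
that ball. -/
theorem confSet_subset_cone_ball
    {k : ℕ} (p : EuclideanSpace ℝ (Fin (k + 1))) (hp : ‖p‖ ≤ 1)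
    {a : ℝ} (ha : 0 < a) (hpa : 1 / a ≤ ‖p‖ ^ 2) :
    ∀ q ∈ confSet p a, ∃ t : ℝ, 0 < t ∧
      ‖t • q - p‖ < Real.sqrt ((1 / a) * (1 - ‖p‖ ^ 2 + 1 / a)) := by
  rintro q ⟨hq1, hq2⟩
  have hP1 : ‖p‖ ^ 2 ≤ 1 := by nlinarith [norm_nonneg p]
  set s : ℝ := inner ℝ p q with hs
  have hexp : ‖p - q‖ ^ 2 = ‖p‖ ^ 2 - 2 * s + ‖q‖ ^ 2 := by
    rw [norm_sub_sq_real, ← hs]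
  have hu0 : 0 < ‖q‖ ^ 2 := by
    rcases (sq_nonneg ‖q‖).lt_or_eq with h | h
    · exact h
    · exfalso
      have hq0 : q = 0 := by
        have : ‖q‖ = 0 := by nlinarith
        exact norm_eq_zero.mp this
      rw [hq0] at hq2
      simp at hq2
      have : ‖p‖ ^ 2 < 1 / a := by
        calc ‖p‖ ^ 2 = ‖p - 0‖ ^ 2 := by rw [sub_zero]
        _ < 1 / a := by simpa using hq2
      linarith
  have hu' : (‖q‖ ^ 2) ≠ 0 := ne_of_gt hu0
  have hq2' : (‖p‖ ^ 2 - 2 * s + ‖q‖ ^ 2) * a < 1 - ‖q‖ ^ 2 := by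
    rw [← hexp]; exact (lt_div_iff₀ ha).mp hq2
  have hA : 0 ≤ ‖p‖ ^ 2 * a - 1 := by
    have := (div_le_iff₀ ha).mp hpa; linarith
  have h2 : (‖p‖ ^ 2 * a - 1) + ‖q‖ ^ 2 * (a + 1) < 2 * (s * a) := by nlinarith
  have hs0 : 0 < s := by nlinarith
  have h3 : ((‖p‖ ^ 2 * a - 1) + ‖q‖ ^ 2 * (a + 1)) ^ 2 < (2 * (s * a)) ^ 2 :=
    pow_lt_pow_left₀ h2 (by nlinarith) two_ne_zero
  have hkey : (s * a) ^ 2 > (‖q‖ ^ 2 * (a + 1)) * (‖p‖ ^ 2 * a - 1) := by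
    nlinarith [h3, sq_nonneg (‖p‖ ^ 2 * a - 1 - ‖q‖ ^ 2 * (a + 1))]
  refine ⟨s / ‖q‖ ^ 2, div_pos hs0 hu0, ?_⟩
  refine (Real.lt_sqrt (norm_nonneg _)).mpr ?_
  have hexp2 : ‖(s / ‖q‖ ^ 2) • q - p‖ ^ 2 = ‖p‖ ^ 2 - s ^ 2 / ‖q‖ ^ 2 := by
    rw [norm_sub_sq_real, real_inner_smul_left,
      show (inner ℝ q p : ℝ) = s by rw [hs, real_inner_comm], norm_smul]
    rw [Real.norm_eq_abs, mul_pow, sq_abs]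
    field_simp
    ring
  rw [hexp2]
  have key2 : (‖p‖ ^ 2 - s ^ 2 / ‖q‖ ^ 2) * (a ^ 2 * ‖q‖ ^ 2) <
      ((1 / a) * (1 - ‖p‖ ^ 2 + 1 / a)) * (a ^ 2 * ‖q‖ ^ 2) := by
    have eL : (‖p‖ ^ 2 - s ^ 2 / ‖q‖ ^ 2) * (a ^ 2 * ‖q‖ ^ 2) =
        (‖p‖ ^ 2 * ‖q‖ ^ 2 - s ^ 2) * a ^ 2 := by
      linear_combination (-a ^ 2) * (div_mul_cancel₀ (s ^ 2) hu')
    have eR : ((1 / a) * (1 - ‖p‖ ^ 2 + 1 / a)) * (a ^ 2 * ‖q‖ ^ 2) =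
        (a * (1 - ‖p‖ ^ 2) + 1) * ‖q‖ ^ 2 := by
      field_simp
    rw [eL, eR]
    nlinarith [hkey]
  exact lt_of_mul_lt_mul_right key2 (by positivity)
end

section
/- Let α ∈ (0,1) and set ε := √((1/(α·n))(1 − ‖Z̄_n‖² + 1/(α·n))). Then with probability at least 1 − α, the extrinsic population mean set proj_M(E Z) is contained in π(B_ε(Z̄_n)), i.e. P( proj_M(E Z) ⊆ ⋃_{q ∈ B_ε(Z̄_n)} proj_M(q) ) ≥ 1 − α. -/
open MeasureTheory ProbabilityTheory Metric RealInnerProductSpace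

/-- The metric projection onto a subset `M` of `ℝ^{k+1}`: the set of points of `M`
nearest to `x`. -/
def metricProj {k : ℕ} (M : Set (EuclideanSpace ℝ (Fin (k + 1))))
    (x : EuclideanSpace ℝ (Fin (k + 1))) : Set (EuclideanSpace ℝ (Fin (k + 1))) :=
  {y ∈ M | dist x y = Metric.infDist x M}

section Aux

variable {k : ℕ} {M : Set (EuclideanSpace ℝ (Fin (k + 1)))}



lemma mem_metricProj_iff' (hMne : M.Nonempty) (x y : EuclideanSpace ℝ (Fin (k + 1))) :
    y ∈ metricProj M x ↔ y ∈ M ∧ ∀ z ∈ M, dist x y ≤ dist x z := by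
  constructor
  · rintro ⟨hyM, hy⟩
    exact ⟨hyM, fun z hz => hy ▸ Metric.infDist_le_dist_of_mem hz⟩
  · rintro ⟨hyM, h⟩
    refine ⟨hyM, le_antisymm ?_ (Metric.infDist_le_dist_of_mem hyM)⟩
    have : Nonempty M := hMne.to_subtype
    rw [Metric.infDist_eq_iInf]
    exact le_ciInf fun z => h z z.2

lemma dist_le_iff_inner (hMsph : M ⊆ Metric.sphere (0 : EuclideanSpace ℝ (Fin (k + 1))) 1)
    (x : EuclideanSpace ℝ (Fin (k + 1))) {y z : EuclideanSpace ℝ (Fin (k + 1))}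
    (hy : y ∈ M) (hz : z ∈ M) :
    dist x y ≤ dist x z ↔ ⟪x, z⟫ ≤ ⟪x, y⟫ := by
  have hy1 : ‖y‖ = 1 := by simpa using hMsph hy
  have hz1 : ‖z‖ = 1 := by simpa using hMsph hz
  have ey : dist x y ^ 2 = ‖x‖ ^ 2 - 2 * ⟪x, y⟫ + 1 := by
    rw [dist_eq_norm, norm_sub_sq_real, hy1]; ring
  have ez : dist x z ^ 2 = ‖x‖ ^ 2 - 2 * ⟪x, z⟫ + 1 := by
    rw [dist_eq_norm, norm_sub_sq_real, hz1]; ring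
  constructor
  · intro h
    nlinarith [dist_nonneg (x := x) (y := y), dist_nonneg (x := x) (y := z)]
  · intro h
    nlinarith [dist_nonneg (x := x) (y := y), dist_nonneg (x := x) (y := z)]

lemma metricProj_smul_subset' (hMne : M.Nonempty)
    (hMsph : M ⊆ Metric.sphere (0 : EuclideanSpace ℝ (Fin (k + 1))) 1)
    (m : EuclideanSpace ℝ (Fin (k + 1))) {s : ℝ} (hs : 0 < s) :
    metricProj M m ⊆ metricProj M (s • m) := by
  intro y hy
  rw [mem_metricProj_iff' hMne] at hy ⊢
  refine ⟨hy.1, fun z hz => ?_⟩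
  rw [dist_le_iff_inner hMsph _ hy.1 hz, real_inner_smul_left, real_inner_smul_left]
  exact mul_le_mul_of_nonneg_left ((dist_le_iff_inner hMsph _ hy.1 hz).1 (hy.2 z hz)) hs.le

lemma metricProj_zero' (hMne : M.Nonempty)
    (hMsph : M ⊆ Metric.sphere (0 : EuclideanSpace ℝ (Fin (k + 1))) 1) :
    M ⊆ metricProj M 0 := by
  intro y hy
  rw [mem_metricProj_iff' hMne]
  refine ⟨hy, fun z hz => ?_⟩
  have hy1 : ‖y‖ = 1 := by simpa using hMsph hy
  have hz1 : ‖z‖ = 1 := by simpa using hMsph hz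
  simp [dist_eq_norm, hy1, hz1]

lemma deterministic_cover (hMne : M.Nonempty)
    (hMsph : M ⊆ Metric.sphere (0 : EuclideanSpace ℝ (Fin (k + 1))) 1)
    (m x : EuclideanSpace ℝ (Fin (k + 1))) {β : ℝ} (hβ : 0 < β)
    (hm : ‖m‖ ≤ 1)
    (h : ‖x - m‖ ^ 2 < β * (1 - ‖m‖ ^ 2) ∨ x = m) :
    metricProj M m ⊆ ⋃ q ∈ Metric.ball x (Real.sqrt (β * (1 - ‖x‖ ^ 2 + β))),
      metricProj M q := by
  intro y hy
  rw [Set.mem_iUnion₂]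
  rcases h with h | rfl
  · -- main case
    rcases le_or_gt ⟪x, m⟫ 0 with hxm | hxm
    · -- q := 0
      refine ⟨0, ?_, metricProj_zero' hMne hMsph hy.1⟩
      rw [Metric.mem_ball]
      have hexp : ‖x - m‖ ^ 2 = ‖x‖ ^ 2 - 2 * ⟪x, m⟫ + ‖m‖ ^ 2 := norm_sub_sq_real x m
      have hx2 : ‖x‖ ^ 2 < β := by nlinarith [sq_nonneg ‖m‖]
      have hβx : ‖x‖ ^ 2 < β * (1 - ‖x‖ ^ 2 + β) := by nlinarith
      have : dist (0 : EuclideanSpace ℝ (Fin (k+1))) x = ‖x‖ := by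
        rw [dist_comm]; simp
      rw [this]
      exact Real.lt_sqrt_of_sq_lt hβx
    · -- q := (⟪x,m⟫/‖m‖²) • m
      have hmne : m ≠ 0 := by
        rintro rfl; simp at hxm
      have hc : 0 < ‖m‖ := norm_pos_iff.mpr hmne
      set c : ℝ := ‖m‖ with hcdef
      set a : ℝ := ⟪x, m⟫ / c with hadef
      have ha : 0 < a := div_pos hxm hc
      have hs : (0 : ℝ) < a / c := div_pos ha hc
      refine ⟨(a / c) • m, ?_, metricProj_smul_subset' hMne hMsph m hs hy⟩
      rw [Metric.mem_ball]
      have him : ⟪x, m⟫ = a * c := by rw [hadef, div_mul_cancel₀ _ hc.ne']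
      have hdist : dist x ((a / c) • m) ^ 2 = ‖x‖ ^ 2 - a ^ 2 := by
        rw [dist_eq_norm, norm_sub_sq_real, real_inner_smul_right, norm_smul, him]
        rw [Real.norm_eq_abs, abs_of_pos hs, mul_pow]
        field_simp
        ring
      have hexp : ‖x - m‖ ^ 2 = ‖x‖ ^ 2 - 2 * (a * c) + c ^ 2 := by
        rw [norm_sub_sq_real, him]
      have key : ‖x‖ ^ 2 - a ^ 2 < β * (1 - ‖x‖ ^ 2 + β) := by
        nlinarith [sq_nonneg (a - c - β * c), mul_pos (show (0:ℝ) < 1 + β by linarith)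
          (show (0:ℝ) < β * (1 - c ^ 2) - ‖x - m‖ ^ 2 by linarith)]
      have h0 : (0 : ℝ) ≤ dist x ((a / c) • m) := dist_nonneg
      rw [dist_comm]
      exact Real.lt_sqrt_of_sq_lt (by rw [hdist]; exact key)
  · -- x = m
    refine ⟨x, ?_, hy⟩
    rw [Metric.mem_ball, dist_self]
    apply Real.sqrt_pos.mpr
    have h1 : ‖x‖ ^ 2 ≤ 1 := by nlinarith [norm_nonneg x]
    nlinarith


lemma coord_abs_le_norm (x : EuclideanSpace ℝ (Fin (k + 1))) (l : Fin (k + 1)) :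
    |x l| ≤ ‖x‖ := by
  rw [EuclideanSpace.norm_eq]
  calc |x l| = Real.sqrt ((x l) ^ 2) := (Real.sqrt_sq_eq_abs _).symm
  _ ≤ _ := by
      apply Real.sqrt_le_sqrt
      rw [show (x l) ^ 2 = ‖x l‖ ^ 2 by rw [Real.norm_eq_abs, sq_abs]]
      exact Finset.single_le_sum (f := fun i => ‖x i‖ ^ 2)
        (fun i _ => by positivity) (Finset.mem_univ l)

lemma mean_sq_integral {n : ℕ} (hn : 1 ≤ n)
    {Ω : Type*} [MeasurableSpace Ω] (μ : Measure Ω) [IsProbabilityMeasure μ]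
    (Z : Fin n → Ω → EuclideanSpace ℝ (Fin (k + 1)))
    (hZmeas : ∀ i, Measurable (Z i))
    (hindep : iIndepFun Z μ)
    (hunit : ∀ i, ∀ᵐ ω ∂μ, ‖Z i ω‖ = 1)
    (m : EuclideanSpace ℝ (Fin (k + 1))) (hm : ∀ i, ∫ ω, Z i ω ∂μ = m) :
    ∫ ω, ‖(n : ℝ)⁻¹ • ∑ i, Z i ω - m‖ ^ 2 ∂μ = (1 - ‖m‖ ^ 2) / n := by
  have hn0 : (n : ℝ) ≠ 0 := by positivity
  have hm1 : ‖m‖ ≤ 1 := by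
    rw [← hm ⟨0, hn⟩]
    calc ‖∫ ω, Z ⟨0, hn⟩ ω ∂μ‖ ≤ ∫ ω, ‖Z ⟨0, hn⟩ ω‖ ∂μ := norm_integral_le_integral_norm _
    _ = ∫ (_ : Ω), (1 : ℝ) ∂μ := integral_congr_ae (hunit _)
    _ = 1 := by simp
  have hZint : ∀ i, Integrable (Z i) μ := fun i =>
    ⟨(hZmeas i).aestronglyMeasurable,
      HasFiniteIntegral.of_bounded (C := 1) ((hunit i).mono fun ω h => h.le)⟩
  set Y : Fin n → Ω → EuclideanSpace ℝ (Fin (k + 1)) := fun i ω => Z i ω - m with hY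
  have hYmeas : ∀ i, Measurable (Y i) := fun i => (hZmeas i).sub measurable_const
  have hYbdd : ∀ i, ∀ᵐ ω ∂μ, ‖Y i ω‖ ≤ 2 := fun i =>
    (hunit i).mono fun ω h => by
      calc ‖Z i ω - m‖ ≤ ‖Z i ω‖ + ‖m‖ := norm_sub_le _ _
      _ ≤ 2 := by rw [h]; linarith
  have hip_int : ∀ i j, Integrable (fun ω => ⟪Y i ω, Y j ω⟫) μ := by
    intro i j
    refine ⟨((hYmeas i).inner (hYmeas j)).aestronglyMeasurable,
      HasFiniteIntegral.of_bounded (C := 4) ?_⟩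
    filter_upwards [hYbdd i, hYbdd j] with ω h1 h2
    calc ‖⟪Y i ω, Y j ω⟫‖ ≤ ‖Y i ω‖ * ‖Y j ω‖ := by
          rw [Real.norm_eq_abs]; exact abs_real_inner_le_norm _ _
    _ ≤ 2 * 2 := mul_le_mul h1 h2 (norm_nonneg _) (by norm_num)
    _ = 4 := by norm_num
  -- pointwise expansion
  have hpt : ∀ ω, ‖(n : ℝ)⁻¹ • ∑ i, Z i ω - m‖ ^ 2
      = (n : ℝ)⁻¹ ^ 2 * ∑ i, ∑ j, ⟪Y i ω, Y j ω⟫ := by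
    intro ω
    have h1 : (n : ℝ)⁻¹ • ∑ i, Z i ω - m = (n : ℝ)⁻¹ • ∑ i, Y i ω := by
      simp only [hY, Finset.sum_sub_distrib]
      rw [smul_sub, Finset.sum_const, Finset.card_univ, Fintype.card_fin,
        ← Nat.cast_smul_eq_nsmul ℝ, smul_smul, inv_mul_cancel₀ hn0, one_smul]
    have hsum : ‖∑ i, Y i ω‖ ^ 2 = ∑ i, ∑ j, ⟪Y i ω, Y j ω⟫ := by
      rw [← real_inner_self_eq_norm_sq, sum_inner]
      exact Finset.sum_congr rfl fun i _ => inner_sum _ _ _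
    rw [h1, norm_smul, mul_pow, hsum, Real.norm_eq_abs, sq_abs]
  -- diagonal terms
  have hdiag : ∀ i, ∫ ω, ⟪Y i ω, Y i ω⟫ ∂μ = 1 - ‖m‖ ^ 2 := by
    intro i
    have hint2 : Integrable (fun ω => ⟪m, Z i ω⟫) μ := by
      refine ⟨(measurable_const.inner (hZmeas i)).aestronglyMeasurable,
        HasFiniteIntegral.of_bounded (C := ‖m‖) ?_⟩
      filter_upwards [hunit i] with ω h
      calc ‖⟪m, Z i ω⟫‖ ≤ ‖m‖ * ‖Z i ω‖ := by
            rw [Real.norm_eq_abs]; exact abs_real_inner_le_norm _ _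
      _ = ‖m‖ := by rw [h, mul_one]
    have hptd : ∀ᵐ ω ∂μ, ⟪Y i ω, Y i ω⟫ = (1 + ‖m‖ ^ 2) - 2 * ⟪m, Z i ω⟫ := by
      filter_upwards [hunit i] with ω h
      rw [real_inner_self_eq_norm_sq, hY]
      simp only
      rw [norm_sub_sq_real, h, real_inner_comm]
      ring
    rw [integral_congr_ae hptd,
      integral_sub (integrable_const _) (hint2.const_mul 2), integral_const,
      integral_const_mul, integral_inner (hZint i), hm i, real_inner_self_eq_norm_sq]
    simp only [probReal_univ, one_smul]
    ring
  -- off-diagonal terms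
  have hcoordint : ∀ i j (l : Fin (k + 1)),
      Integrable (fun ω => (Y i ω l) * (Y j ω l)) μ := by
    intro i j l
    have hml : ∀ i', Measurable fun ω => Y i' ω l := fun i' =>
      ((EuclideanSpace.proj l : EuclideanSpace ℝ (Fin (k+1)) →L[ℝ] ℝ)).measurable.comp
        (hYmeas i')
    refine ⟨((hml i).mul (hml j)).aestronglyMeasurable,
      HasFiniteIntegral.of_bounded (C := 4) ?_⟩
    filter_upwards [hYbdd i, hYbdd j] with ω h1 h2
    have e1 : |Y i ω l| ≤ 2 := (coord_abs_le_norm _ _).trans h1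
    have e2 : |Y j ω l| ≤ 2 := (coord_abs_le_norm _ _).trans h2
    rw [Real.norm_eq_abs, abs_mul]
    calc |Y i ω l| * |Y j ω l| ≤ 2 * 2 :=
          mul_le_mul e1 e2 (abs_nonneg _) (by norm_num)
    _ = 4 := by norm_num
  have hoff : ∀ i j, i ≠ j → ∫ ω, ⟪Y i ω, Y j ω⟫ ∂μ = 0 := by
    intro i j hij
    have hIndZ : IndepFun (Z i) (Z j) μ := hindep.indepFun hij
    have hcoordzero : ∀ i', ∀ l : Fin (k + 1), ∫ ω, Y i' ω l ∂μ = 0 := by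
      intro i' l
      have h1 : Integrable (fun ω =>
          (EuclideanSpace.proj l : EuclideanSpace ℝ (Fin (k+1)) →L[ℝ] ℝ) (Z i' ω)) μ :=
        (EuclideanSpace.proj l : EuclideanSpace ℝ (Fin (k+1)) →L[ℝ] ℝ).integrable_comp
          (hZint i')
      have h2 : ∫ ω, (Z i' ω) l ∂μ = m l := by
        have h3 := (EuclideanSpace.proj l :
          EuclideanSpace ℝ (Fin (k+1)) →L[ℝ] ℝ).integral_comp_comm (hZint i')
        rw [hm i'] at h3
        exact h3
      have h4 : (fun ω => Y i' ω l) = fun ω => (Z i' ω) l - m l := by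
        funext ω; simp [hY]
      rw [h4, integral_sub (by exact h1) (integrable_const _), h2, integral_const]
      simp
    have hcoord : ∀ (l : Fin (k + 1)), ∫ ω, (Y i ω l) * (Y j ω l) ∂μ = 0 := by
      intro l
      have hφ : Measurable (fun x : EuclideanSpace ℝ (Fin (k + 1)) => x l - m l) :=
        ((EuclideanSpace.proj l : EuclideanSpace ℝ (Fin (k+1)) →L[ℝ] ℝ).measurable).sub
          measurable_const
      have hInd : IndepFun (fun ω => Y i ω l) (fun ω => Y j ω l) μ := hIndZ.comp hφ hφ
      have hml : ∀ i', Measurable fun ω => Y i' ω l := fun i' =>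
        ((EuclideanSpace.proj l : EuclideanSpace ℝ (Fin (k+1)) →L[ℝ] ℝ)).measurable.comp
          (hYmeas i')
      have := hInd.integral_mul_eq_mul_integral (hml i).aestronglyMeasurable (hml j).aestronglyMeasurable
      rw [show ((fun ω => Y i ω l) * fun ω => Y j ω l) = fun ω => (Y i ω l) * (Y j ω l)
        from rfl] at this
      rw [this, hcoordzero i l, hcoordzero j l, mul_zero]
    have hcalc : ∀ ω, ⟪Y i ω, Y j ω⟫ = ∑ l, (Y i ω l) * (Y j ω l) := by
      intro ω
      rw [PiLp.inner_apply]
      exact Finset.sum_congr rfl fun l _ => by simp [RCLike.inner_apply, conj_trivial]; ring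
    calc ∫ ω, ⟪Y i ω, Y j ω⟫ ∂μ = ∫ ω, ∑ l, (Y i ω l) * (Y j ω l) ∂μ := by
          simp_rw [hcalc]
    _ = ∑ l, ∫ ω, (Y i ω l) * (Y j ω l) ∂μ :=
          integral_finset_sum _ fun l _ => hcoordint i j l
    _ = 0 := by simp [hcoord]
  -- put it together
  calc ∫ ω, ‖(n : ℝ)⁻¹ • ∑ i, Z i ω - m‖ ^ 2 ∂μ
      = ∫ ω, (n : ℝ)⁻¹ ^ 2 * ∑ i, ∑ j, ⟪Y i ω, Y j ω⟫ ∂μ := by simp_rw [hpt]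
  _ = (n : ℝ)⁻¹ ^ 2 * ∫ ω, ∑ i, ∑ j, ⟪Y i ω, Y j ω⟫ ∂μ := integral_const_mul _ _
  _ = (n : ℝ)⁻¹ ^ 2 * ∑ i, ∑ j, ∫ ω, ⟪Y i ω, Y j ω⟫ ∂μ := by
        rw [integral_finset_sum _ fun i _ => integrable_finset_sum _ fun j _ => hip_int i j]
        congr 1
        exact Finset.sum_congr rfl fun i _ => integral_finset_sum _ fun j _ => hip_int i j
  _ = (n : ℝ)⁻¹ ^ 2 * ∑ _i : Fin n, (1 - ‖m‖ ^ 2) := by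
        congr 1
        refine Finset.sum_congr rfl fun i _ => ?_
        rw [Finset.sum_eq_single i]
        · exact hdiag i
        · intro j _ hji; exact hoff i j (Ne.symm hji)
        · intro h; exact absurd (Finset.mem_univ i) h
  _ = (1 - ‖m‖ ^ 2) / n := by
        rw [Finset.sum_const, Finset.card_univ, Fintype.card_fin, nsmul_eq_mul]
        field_simp

end Aux

/-- let `M ⊆ S^k` be nonempty and closed and let `Z, Z₁, …, Zₙ` be
i.i.d. random vectors with values in `M`. With `ε = √((1/(αn))(1 − ‖Z̄ₙ‖² + 1/(αn)))`,
the projection onto `M` of the open ball `B_ε(Z̄ₙ)` covers the extrinsic population mean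
set `proj_M(𝔼Z)` with probability at least `1 − α`. -/
theorem confidence_set_extrinsic_mean
    {k n : ℕ} (hn : 1 ≤ n)
    (M : Set (EuclideanSpace ℝ (Fin (k + 1))))
    (hMne : M.Nonempty) (hMcl : IsClosed M)
    (hMsph : M ⊆ Metric.sphere (0 : EuclideanSpace ℝ (Fin (k + 1))) 1)
    {Ω : Type*} [MeasurableSpace Ω] (μ : Measure Ω) [IsProbabilityMeasure μ]
    (Z0 : Ω → EuclideanSpace ℝ (Fin (k + 1)))
    (Z : Fin n → Ω → EuclideanSpace ℝ (Fin (k + 1)))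
    (hZ0meas : Measurable Z0) (hZmeas : ∀ i, Measurable (Z i))
    (hindep : iIndepFun Z μ)
    (hident : ∀ i, IdentDistrib (Z i) Z0 μ μ)
    (hZ0M : ∀ᵐ ω ∂μ, Z0 ω ∈ M) (hZM : ∀ i, ∀ᵐ ω ∂μ, Z i ω ∈ M) :
    ∀ α : ℝ, α ∈ Set.Ioo (0 : ℝ) 1 →
    ENNReal.ofReal (1 - α)
      ≤ μ {ω | metricProj M (∫ ω', Z0 ω' ∂μ)
            ⊆ ⋃ q ∈ Metric.ball ((n : ℝ)⁻¹ • ∑ i, Z i ω)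
                (Real.sqrt ((1 / (α * n))
                  * (1 - ‖(n : ℝ)⁻¹ • ∑ i, Z i ω‖ ^ 2 + 1 / (α * n)))),
              metricProj M q} := by
  intro α hα
  obtain ⟨hα0, hα1⟩ := hα
  have hn0 : (0 : ℝ) < n := by exact_mod_cast hn
  set β : ℝ := 1 / (α * n) with hβdef
  have hβ : 0 < β := by positivity
  set m : EuclideanSpace ℝ (Fin (k + 1)) := ∫ ω', Z0 ω' ∂μ with hmdef
  set V : ℝ := 1 - ‖m‖ ^ 2 with hVdef
  have hunit : ∀ i, ∀ᵐ ω ∂μ, ‖Z i ω‖ = 1 := fun i =>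
    (hZM i).mono fun ω h => by simpa using hMsph h
  have hunit0 : ∀ᵐ ω ∂μ, ‖Z0 ω‖ = 1 := hZ0M.mono fun ω h => by simpa using hMsph h
  have hZint : ∀ i, Integrable (Z i) μ := fun i =>
    ⟨(hZmeas i).aestronglyMeasurable,
      HasFiniteIntegral.of_bounded (C := 1) ((hunit i).mono fun ω h => h.le)⟩
  have hmInt : ∀ i, ∫ ω, Z i ω ∂μ = m := fun i => (hident i).integral_eq
  have hm1 : ‖m‖ ≤ 1 := by
    rw [hmdef]
    calc ‖∫ ω, Z0 ω ∂μ‖ ≤ ∫ ω, ‖Z0 ω‖ ∂μ := norm_integral_le_integral_norm _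
    _ = ∫ (_ : Ω), (1 : ℝ) ∂μ := integral_congr_ae hunit0
    _ = 1 := by simp
  have hV0 : 0 ≤ V := by
    rw [hVdef]
    nlinarith [norm_nonneg m]
  -- the sample mean and the squared fluctuation
  have hSmeas : Measurable (fun ω => (n : ℝ)⁻¹ • ∑ i, Z i ω) :=
    (Finset.measurable_sum _ fun i _ => hZmeas i).fun_const_smul _
  set f : Ω → ℝ := fun ω => ‖(n : ℝ)⁻¹ • ∑ i, Z i ω - m‖ ^ 2 with hfdef
  have hfmeas : Measurable f := ((hSmeas.sub measurable_const).norm).pow measurable_const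
  have hfnonneg : ∀ ω, 0 ≤ f ω := fun ω => sq_nonneg _
  have hfint : Integrable f μ := by
    refine ⟨hfmeas.aestronglyMeasurable, HasFiniteIntegral.of_bounded (C := (1 + ‖m‖)^2) ?_⟩
    have hall : ∀ᵐ ω ∂μ, ∀ i, ‖Z i ω‖ = 1 := (ae_all_iff).mpr hunit
    filter_upwards [hall] with ω h
    have h1 : ‖(n : ℝ)⁻¹ • ∑ i, Z i ω‖ ≤ 1 := by
      rw [norm_smul]
      calc ‖(n:ℝ)⁻¹‖ * ‖∑ i, Z i ω‖ ≤ (n:ℝ)⁻¹ * ∑ i, ‖Z i ω‖ := by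
            rw [Real.norm_eq_abs, abs_of_nonneg (by positivity)]
            exact mul_le_mul_of_nonneg_left (norm_sum_le _ _) (by positivity)
      _ = (n:ℝ)⁻¹ * n := by
            rw [Finset.sum_congr rfl fun i _ => h i, Finset.sum_const, Finset.card_univ,
              Fintype.card_fin, nsmul_eq_mul, mul_one]
      _ = 1 := inv_mul_cancel₀ (ne_of_gt hn0)
    have h2 : ‖(n : ℝ)⁻¹ • ∑ i, Z i ω - m‖ ≤ 1 + ‖m‖ :=
      (norm_sub_le _ _).trans (by linarith)
    rw [Real.norm_eq_abs, hfdef, abs_of_nonneg (sq_nonneg _)]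
    have := norm_nonneg ((n : ℝ)⁻¹ • ∑ i, Z i ω - m)
    nlinarith
  have hkey : ∫ ω, f ω ∂μ = V / n :=
    mean_sq_integral hn μ Z hZmeas hindep hunit m hmInt
  -- the good event
  set B : Set Ω := {ω | f ω < β * V} ∪ {ω | (n : ℝ)⁻¹ • ∑ i, Z i ω = m} with hBdef
  have hBmeas : MeasurableSet B :=
    (measurableSet_lt hfmeas measurable_const).union
      (hSmeas (measurableSet_singleton m))
  have hBc : μ Bᶜ ≤ ENNReal.ofReal α := by
    rcases eq_or_lt_of_le hV0 with hV | hV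
    · -- V = 0 : the random vectors are a.s. constant
      have hVzero : ∫ ω, f ω ∂μ = 0 := by rw [hkey, ← hV]; simp
      have hf0 : f =ᵐ[μ] 0 :=
        (integral_eq_zero_iff_of_nonneg (fun ω => hfnonneg ω) hfint).mp hVzero
      have hSm : ∀ᵐ ω ∂μ, (n : ℝ)⁻¹ • ∑ i, Z i ω = m := by
        filter_upwards [hf0] with ω h
        have : ‖(n : ℝ)⁻¹ • ∑ i, Z i ω - m‖ ^ 2 = 0 := h
        have h2 : ‖(n : ℝ)⁻¹ • ∑ i, Z i ω - m‖ = 0 := by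
          nlinarith [norm_nonneg ((n : ℝ)⁻¹ • ∑ i, Z i ω - m)]
        rw [norm_eq_zero, sub_eq_zero] at h2
        exact h2
      have h0 : μ {ω | ¬ ((n : ℝ)⁻¹ • ∑ i, Z i ω = m)} = 0 := by
        rw [← ae_iff]; exact hSm
      refine le_trans (measure_mono ?_) (le_trans h0.le zero_le)
      intro ω hω
      rw [hBdef] at hω
      simp only [Set.mem_compl_iff, Set.mem_union, Set.mem_setOf_eq, not_or] at hω
      exact hω.2
    · -- V > 0 : Markov's inequality
      have hmarkov := mul_meas_ge_le_integral_of_nonneg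
        (ae_of_all μ hfnonneg) hfint (β * V)
      rw [hkey] at hmarkov
      have hβV : 0 < β * V := by positivity
      have htoReal : (μ {ω | β * V ≤ f ω}).toReal ≤ α := by
        rw [← mul_le_mul_iff_right₀ hβV]
        refine hmarkov.trans (le_of_eq ?_)
        rw [hβdef]
        field_simp
      have hμle : μ {ω | β * V ≤ f ω} ≤ ENNReal.ofReal α := by
        rw [← ENNReal.ofReal_toReal (measure_ne_top μ {ω | β * V ≤ f ω})]
        exact ENNReal.ofReal_le_ofReal htoReal
      refine le_trans (measure_mono ?_) hμle
      intro ω hω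
      rw [hBdef] at hω
      simp only [Set.mem_compl_iff, Set.mem_union, Set.mem_setOf_eq, not_or, not_lt] at hω
      exact hω.1
  have hB : ENNReal.ofReal (1 - α) ≤ μ B := by
    have h1 : μ B = 1 - μ Bᶜ := by
      rw [measure_compl hBmeas (measure_ne_top μ B), measure_univ]
      rw [ENNReal.sub_sub_cancel (by norm_num) (prob_le_one)]
    rw [h1, ENNReal.ofReal_sub _ hα0.le, ENNReal.ofReal_one]
    exact tsub_le_tsub_left hBc 1
  -- the full-measure event where all samples lie in M
  have hall : ∀ᵐ ω ∂μ, ∀ i, Z i ω ∈ M := (ae_all_iff).mpr hZM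
  set N : Set Ω := {ω | ∀ i, Z i ω ∈ M} with hNdef
  have hN0 : μ Nᶜ = 0 := by
    rw [hNdef, Set.compl_setOf]
    exact ae_iff.mp hall
  -- inclusion in the target event
  have hsub : B ∩ N ⊆ {ω | metricProj M m
      ⊆ ⋃ q ∈ Metric.ball ((n : ℝ)⁻¹ • ∑ i, Z i ω)
          (Real.sqrt (β * (1 - ‖(n : ℝ)⁻¹ • ∑ i, Z i ω‖ ^ 2 + β))),
        metricProj M q} := by
    rintro ω ⟨hωB, hωN⟩
    exact deterministic_cover hMne hMsph m ((n : ℝ)⁻¹ • ∑ i, Z i ω) hβ hm1 hωB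
  calc ENNReal.ofReal (1 - α) ≤ μ B := hB
  _ = μ (B ∩ N) := (measure_inter_conull hN0).symm
  _ ≤ _ := measure_mono hsub
end

section
/- Let p ∈ ℝ^{k+1} with ‖p‖ ≤ 1, and let a > 0 with ‖p‖² ≥ 1/a (in particular p ≠ 0). Then ⋃_{q ∈ C(p,a)} proj_{S^k}(q) = {x ∈ S^k : arccos⟨x, p/‖p‖⟩ < arcsin √((1 − ‖p‖² + 1/a)/(a·‖p‖²))}, i.e. the projection of C(p,a) onto the sphere is the open geodesic ball around p/‖p‖ of radius arcsin √((1 − ‖p‖² + 1/a)/(a·‖p‖²)). (Note that ‖p‖² ≥ 1/a guarantees (1 − ‖p‖² + 1/a)/(a·‖p‖²) ≤ 1.) -/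
section Aux

open Metric Real

/-- The metric projection of a nonzero point onto the unit sphere is its normalization. -/
lemma metricProj_sphere_eq {k : ℕ} (q : EuclideanSpace ℝ (Fin (k + 1))) (hq : q ≠ 0) :
    metricProj (Metric.sphere (0 : EuclideanSpace ℝ (Fin (k + 1))) 1) q
      = {(‖q‖⁻¹ : ℝ) • q} := by
  have hqn : 0 < ‖q‖ := norm_pos_iff.mpr hq
  set u : EuclideanSpace ℝ (Fin (k + 1)) := (‖q‖⁻¹ : ℝ) • q with hu
  have hun : ‖u‖ = 1 := by
    rw [hu, norm_smul, norm_inv, norm_norm, inv_mul_cancel₀ hqn.ne']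
  have humem : u ∈ Metric.sphere (0 : EuclideanSpace ℝ (Fin (k + 1))) 1 :=
    mem_sphere_zero_iff_norm.mpr hun
  have hdistu : dist q u = |‖q‖ - 1| := by
    rw [dist_eq_norm]
    have : q - u = (1 - ‖q‖⁻¹ : ℝ) • q := by
      rw [hu, sub_smul, one_smul]
    rw [this, norm_smul, Real.norm_eq_abs]
    rw [← abs_of_pos hqn, ← abs_mul]
    congr 1
    field_simp; rw [abs_of_pos hqn]; ring
  have hinf : Metric.infDist q (Metric.sphere (0 : EuclideanSpace ℝ (Fin (k + 1))) 1)
      = |‖q‖ - 1| := by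
    apply le_antisymm
    · rw [← hdistu]; exact Metric.infDist_le_dist_of_mem humem
    · by_contra hlt
      push_neg at hlt
      obtain ⟨y, hy, hdy⟩ := (Metric.infDist_lt_iff ⟨u, humem⟩).mp hlt
      have hyn : ‖y‖ = 1 := mem_sphere_zero_iff_norm.mp hy
      have : |‖q‖ - 1| ≤ dist q y := by
        rw [dist_eq_norm, ← hyn]
        exact abs_norm_sub_norm_le q y
      linarith
  ext y
  simp only [metricProj, Set.mem_setOf_eq, Set.mem_singleton_iff, hinf]
  constructor
  · rintro ⟨hy, hdy⟩
    have hyn : ‖y‖ = 1 := mem_sphere_zero_iff_norm.mp hy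
    have hsq : ‖q - y‖ ^ 2 = (‖q‖ - 1) ^ 2 := by
      rw [← dist_eq_norm, hdy, sq_abs]
    rw [norm_sub_sq_real, hyn] at hsq
    have hinner : (inner ℝ q y : ℝ) = ‖q‖ * ‖y‖ := by
      rw [hyn]; nlinarith
    have := inner_eq_norm_mul_iff_real.mp hinner
    rw [hyn, one_smul] at this
    rw [hu]
    calc y = (‖q‖⁻¹ : ℝ) • ((‖q‖ : ℝ) • y) := by
          rw [smul_smul, inv_mul_cancel₀ hqn.ne', one_smul]
      _ = (‖q‖⁻¹ : ℝ) • q := by rw [← this]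
  · rintro rfl
    exact ⟨humem, hdistu⟩

/-- The purely algebraic quadratic equivalence. -/
lemma quad_iff {a r c : ℝ} (ha : 0 < a) (h1 : 1 ≤ a * r ^ 2) (hcr : c ≤ r) (hr1 : r ≤ 1) :
    (∃ t : ℝ, 0 < t ∧ t ≤ 1 ∧ r ^ 2 - 2 * c * t + t ^ 2 < (1 - t ^ 2) / a) ↔
      (0 < c ∧ (a + 1) * (a * r ^ 2 - 1) < a ^ 2 * c ^ 2) := by
  have ha' : (0:ℝ) < a + 1 := by linarith
  constructor
  · rintro ⟨t, ht0, ht1, htq⟩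
    rw [lt_div_iff₀ ha] at htq
    have hg : (a + 1) * t ^ 2 - 2 * a * c * t + (a * r ^ 2 - 1) < 0 := by nlinarith
    have hc : 0 < c := by
      by_contra hcn
      push_neg at hcn
      have h2 : a * c * t ≤ 0 :=
        mul_nonpos_of_nonpos_of_nonneg (mul_nonpos_of_nonneg_of_nonpos ha.le hcn) ht0.le
      nlinarith [pow_pos ht0 2]
    refine ⟨hc, ?_⟩
    nlinarith [sq_nonneg ((a + 1) * t - a * c)]
  · rintro ⟨hc, hq⟩
    refine ⟨a * c / (a + 1), by positivity, ?_, ?_⟩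
    · rw [div_le_one ha']
      nlinarith
    · rw [lt_div_iff₀ ha]
      have h : (a + 1) * (a * c / (a + 1)) ^ 2 - 2 * a * c * (a * c / (a + 1))
          + (a * r ^ 2 - 1) < 0 := by
        have : (a + 1) * (a * c / (a + 1)) ^ 2 - 2 * a * c * (a * c / (a + 1))
            = -(a ^ 2 * c ^ 2) / (a + 1) := by
          field_simp; ring
        rw [this]
        rw [div_add' _ _ _ ha'.ne', div_lt_iff₀ ha']
        nlinarith
      nlinarith

/-- The trigonometric equivalence. -/
lemma trig_iff {a r c : ℝ} (ha : 0 < a) (hr : 0 < r) (h1 : 1 ≤ a * r ^ 2) (hr1 : r ≤ 1)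
    (hcr : |c| ≤ r) :
    Real.arccos (r⁻¹ * c) < Real.arcsin (Real.sqrt ((1 - r ^ 2 + 1 / a) / (a * r ^ 2))) ↔
      (0 < c ∧ (a + 1) * (a * r ^ 2 - 1) < a ^ 2 * c ^ 2) := by
  set s : ℝ := (1 - r ^ 2 + 1 / a) / (a * r ^ 2) with hs
  have hden : (0:ℝ) < a * r ^ 2 := by positivity
  have hs0 : 0 ≤ s := by
    apply div_nonneg _ hden.le
    have : 0 < 1 / a := by positivity
    nlinarith
  have hs1 : s ≤ 1 := by
    rw [hs, div_le_one hden]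
    have h1a : 1 / a ≤ r ^ 2 := by rw [div_le_iff₀ ha]; linarith
    linarith
  have hsq : Real.sqrt s ^ 2 = s := Real.sq_sqrt hs0
  have hsqle : Real.sqrt s ≤ 1 := Real.sqrt_le_one.mpr hs1
  have harcsin : Real.arcsin (Real.sqrt s)
      = Real.arccos (Real.sqrt (1 - s)) := by
    rw [Real.arcsin_eq_arccos (Real.sqrt_nonneg s), hsq]
  have hd1 : r⁻¹ * c ∈ Set.Icc (-1:ℝ) 1 := by
    have habs : |r⁻¹ * c| ≤ 1 := by
      rw [abs_mul, abs_inv, abs_of_pos hr]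
      calc r⁻¹ * |c| ≤ r⁻¹ * r :=
            mul_le_mul_of_nonneg_left hcr (by positivity)
        _ = 1 := inv_mul_cancel₀ hr.ne'
    exact ⟨neg_le_of_abs_le habs, le_of_abs_le habs⟩
  have hd2 : Real.sqrt (1 - s) ∈ Set.Icc (-1:ℝ) 1 := by
    constructor
    · linarith [Real.sqrt_nonneg (1 - s)]
    · exact Real.sqrt_le_one.mpr (by linarith)
  rw [harcsin, Real.strictAntiOn_arccos.lt_iff_gt hd1 hd2]
  have h1ms : 1 - s = (a + 1) * (a * r ^ 2 - 1) / (a ^ 2 * r ^ 2) := by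
    rw [hs]; field_simp; ring
  constructor
  · intro h
    have hd0 : 0 < r⁻¹ * c := lt_of_le_of_lt (Real.sqrt_nonneg _) h
    have hc : 0 < c := by
      by_contra hc
      push_neg at hc
      have : r⁻¹ * c ≤ 0 := mul_nonpos_of_nonneg_of_nonpos (by positivity) hc
      linarith
    refine ⟨hc, ?_⟩
    rw [Real.sqrt_lt' hd0] at h
    rw [h1ms] at h
    rw [div_lt_iff₀ (by positivity)] at h
    have : (r⁻¹ * c) ^ 2 = c ^ 2 / r ^ 2 := by
      rw [mul_pow]; field_simp
    rw [this, div_mul_eq_mul_div, lt_div_iff₀ (by positivity)] at h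
    nlinarith
  · rintro ⟨hc, hq⟩
    have hd0 : 0 < r⁻¹ * c := by positivity
    rw [Real.sqrt_lt' hd0, h1ms, div_lt_iff₀ (by positivity)]
    have : (r⁻¹ * c) ^ 2 = c ^ 2 / r ^ 2 := by
      rw [mul_pow]; field_simp
    rw [this, div_mul_eq_mul_div, lt_div_iff₀ (by positivity)]
    nlinarith

end Aux

/-- for `‖p‖ ≤ 1`, `a > 0` with `‖p‖² ≥ 1/a`, the projection of `C(p,a)`
onto the full sphere `S^k` is the open geodesic ball around `p/‖p‖` of radius
`arcsin √((1−‖p‖²+1/a)/(a‖p‖²))`. -/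
theorem proj_confSet_sphere_eq_geodesic_ball
    {k : ℕ} (p : EuclideanSpace ℝ (Fin (k + 1))) (hp : ‖p‖ ≤ 1)
    {a : ℝ} (ha : 0 < a) (hpa : 1 / a ≤ ‖p‖ ^ 2) :
    (⋃ q ∈ confSet p a,
        metricProj (Metric.sphere (0 : EuclideanSpace ℝ (Fin (k + 1))) 1) q)
      = {x : EuclideanSpace ℝ (Fin (k + 1)) |
          x ∈ Metric.sphere (0 : EuclideanSpace ℝ (Fin (k + 1))) 1 ∧
          Real.arccos (inner ℝ x (‖p‖⁻¹ • p) : ℝ)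
            < Real.arcsin (Real.sqrt ((1 - ‖p‖ ^ 2 + 1 / a) / (a * ‖p‖ ^ 2)))} := by
  have hr2 : (0:ℝ) < ‖p‖ ^ 2 := lt_of_lt_of_le (by positivity) hpa
  have hrpos : 0 < ‖p‖ := by nlinarith [norm_nonneg p, hr2]
  have h1ar : 1 ≤ a * ‖p‖ ^ 2 := by
    rw [div_le_iff₀ ha] at hpa; linarith [hpa]
  -- q ∈ confSet implies q ≠ 0
  have hq0 : ∀ q : EuclideanSpace ℝ (Fin (k + 1)), q ∈ confSet p a → q ≠ 0 := by
    intro q hq hq'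
    have h2 : ‖p - q‖ ^ 2 < (1 - ‖q‖ ^ 2) / a := hq.2
    rw [hq', sub_zero, norm_zero] at h2
    rw [div_le_iff₀ ha] at hpa
    rw [lt_div_iff₀ ha] at h2
    nlinarith
  ext x
  simp only [Set.mem_iUnion, Set.mem_setOf_eq]
  constructor
  · rintro ⟨q, hqC, hqproj⟩
    have hq := hq0 q hqC
    rw [metricProj_sphere_eq q hq] at hqproj
    rw [Set.mem_singleton_iff] at hqproj
    subst hqproj
    have hqn : 0 < ‖q‖ := norm_pos_iff.mpr hq
    have hxn : ‖(‖q‖⁻¹ : ℝ) • q‖ = 1 := by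
      rw [norm_smul, norm_inv, norm_norm, inv_mul_cancel₀ hqn.ne']
    refine ⟨mem_sphere_zero_iff_norm.mpr hxn, ?_⟩
    set x : EuclideanSpace ℝ (Fin (k + 1)) := (‖q‖⁻¹ : ℝ) • q with hxdef
    set c : ℝ := (inner ℝ x p : ℝ) with hc
    have hinner : (inner ℝ x ((‖p‖⁻¹ : ℝ) • p) : ℝ) = ‖p‖⁻¹ * c := by
      rw [real_inner_smul_right]
    rw [hinner]
    rw [trig_iff ha hrpos h1ar hp (by
      calc |c| ≤ ‖x‖ * ‖p‖ := abs_real_inner_le_norm x p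
        _ = ‖p‖ := by rw [hxn, one_mul])]
    rw [← quad_iff ha h1ar (by
      calc c ≤ |c| := le_abs_self c
        _ ≤ ‖x‖ * ‖p‖ := abs_real_inner_le_norm x p
        _ = ‖p‖ := by rw [hxn, one_mul]) hp]
    refine ⟨‖q‖, hqn, hqC.1, ?_⟩
    have hqx : (‖q‖ : ℝ) • x = q := by
      rw [hxdef, smul_smul, mul_inv_cancel₀ hqn.ne', one_smul]
    have hexp : ‖p - (‖q‖ : ℝ) • x‖ ^ 2 = ‖p‖ ^ 2 - 2 * c * ‖q‖ + ‖q‖ ^ 2 := by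
      rw [hqx]
      rw [norm_sub_sq_real]
      have : (inner ℝ p q : ℝ) = ‖q‖ * c := by
        rw [hc, hxdef, real_inner_smul_left, real_inner_comm]
        field_simp
      rw [this]; ring
    have := hqC.2
    rw [hqx] at hexp
    calc ‖p‖ ^ 2 - 2 * c * ‖q‖ + ‖q‖ ^ 2 = ‖p - q‖ ^ 2 := hexp.symm
      _ < (1 - ‖q‖ ^ 2) / a := this
  · rintro ⟨hxs, hang⟩
    have hxn : ‖x‖ = 1 := mem_sphere_zero_iff_norm.mp hxs
    set c : ℝ := (inner ℝ x p : ℝ) with hc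
    have hinner : (inner ℝ x ((‖p‖⁻¹ : ℝ) • p) : ℝ) = ‖p‖⁻¹ * c := by
      rw [real_inner_smul_right]
    rw [hinner] at hang
    rw [trig_iff ha hrpos h1ar hp (by
      calc |c| ≤ ‖x‖ * ‖p‖ := abs_real_inner_le_norm x p
        _ = ‖p‖ := by rw [hxn, one_mul])] at hang
    rw [← quad_iff ha h1ar (by
      calc c ≤ |c| := le_abs_self c
        _ ≤ ‖x‖ * ‖p‖ := abs_real_inner_le_norm x p
        _ = ‖p‖ := by rw [hxn, one_mul]) hp] at hang
    obtain ⟨t, ht0, ht1, htq⟩ := hang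
    refine ⟨(t : ℝ) • x, ⟨?_, ?_⟩, ?_⟩
    · rw [norm_smul, Real.norm_eq_abs, abs_of_pos ht0, hxn, mul_one]; exact ht1
    · have hexp : ‖p - (t : ℝ) • x‖ ^ 2 = ‖p‖ ^ 2 - 2 * c * t + t ^ 2 := by
        rw [norm_sub_sq_real, real_inner_smul_right, norm_smul, Real.norm_eq_abs,
          abs_of_pos ht0, hxn, mul_one, real_inner_comm]
        ring
      rw [hexp, norm_smul, Real.norm_eq_abs, abs_of_pos ht0, hxn, mul_one]
      exact htq
    · have htx : (t : ℝ) • x ≠ 0 := by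
        intro h
        have : ‖(t : ℝ) • x‖ = 0 := by rw [h, norm_zero]
        rw [norm_smul, Real.norm_eq_abs, abs_of_pos ht0, hxn, mul_one] at this
        linarith
      rw [metricProj_sphere_eq _ htx, Set.mem_singleton_iff]
      rw [norm_smul, Real.norm_eq_abs, abs_of_pos ht0, hxn, mul_one, smul_smul,
        inv_mul_cancel₀ ht0.ne', one_smul]
end

section
/- Let α ∈ (0,1) and suppose E Z ≠ 0 with ‖E Z‖ > 1/(α·n). Then P( ‖Z̄_n‖ ≤ 1/(α·n) ) ≤ exp( −(n/2)·(‖E Z‖ − 1/(α·n))² ). -/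
open MeasureTheory ProbabilityTheory


lemma hoeff_pos {a : ℝ} (ha : |a| ≤ 1) (x : ℝ) : 0 < Real.cosh x + a * Real.sinh x := by
  obtain ⟨ha1, ha2⟩ := abs_le.mp ha
  rcases le_total 0 x with h | h
  · have hs : 0 ≤ Real.sinh x := by simpa using Real.sinh_le_sinh.mpr h
    have : (-1) * Real.sinh x ≤ a * Real.sinh x := mul_le_mul_of_nonneg_right ha1 hs
    have he : Real.cosh x - Real.sinh x = Real.exp (-x) := Real.cosh_sub_sinh x
    nlinarith [Real.exp_pos (-x)]
  · have hs : Real.sinh x ≤ 0 := by simpa using Real.sinh_le_sinh.mpr h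
    have : a * Real.sinh x ≥ 1 * Real.sinh x := by
      exact mul_le_mul_of_nonpos_right ha2 hs
    have he : Real.cosh x + Real.sinh x = Real.exp x := Real.cosh_add_sinh x
    nlinarith [Real.exp_pos x]

lemma hoeff_aux {a : ℝ} (ha : |a| ≤ 1) {s : ℝ} (hs : 0 ≤ s) :
    Real.cosh s + a * Real.sinh s ≤ Real.exp (a * s + s ^ 2 / 2) := by
  set h : ℝ → ℝ := fun x => Real.cosh x + a * Real.sinh x with hh
  set h' : ℝ → ℝ := fun x => Real.sinh x + a * Real.cosh x with hh'
  have hpos : ∀ x, 0 < h x := hoeff_pos ha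
  set φ : ℝ → ℝ := fun x => a + x - h' x / h x with hφ
  set g : ℝ → ℝ := fun x => a * x + x ^ 2 / 2 - Real.log (h x) with hg
  have hDh : ∀ x, HasDerivAt h (h' x) x := fun x =>
    (Real.hasDerivAt_cosh x).add ((Real.hasDerivAt_sinh x).const_mul a)
  have hDh' : ∀ x, HasDerivAt h' (h x) x := fun x =>
    (Real.hasDerivAt_sinh x).add ((Real.hasDerivAt_cosh x).const_mul a)
  have hDg : ∀ x, HasDerivAt g (φ x) x := by
    intro x
    have h1 : HasDerivAt (fun x : ℝ => a * x + x ^ 2 / 2) (a + x) x := by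
      have := ((hasDerivAt_id x).const_mul a).add ((hasDerivAt_pow 2 x).div_const 2)
      exact this.congr_deriv (by rw [show (2:ℕ)-1 = 1 from rfl]; push_cast; ring)
    have h2 : HasDerivAt (fun x => Real.log (h x)) (h' x / h x) x :=
      (hDh x).log (hpos x).ne'
    exact h1.sub h2
  have hDφ : ∀ x, HasDerivAt φ (1 - (h x * h x - h' x * h' x) / h x ^ 2) x := by
    intro x
    have h1 : HasDerivAt (fun x : ℝ => a + x) 1 x := (hasDerivAt_id x).const_add a
    have h2 : HasDerivAt (fun x => h' x / h x) ((h x * h x - h' x * h' x) / h x ^ 2) x :=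
      (hDh' x).div (hDh x) (hpos x).ne'
    exact h1.sub h2
  have hφmono : Monotone φ := by
    refine monotone_of_deriv_nonneg (fun x => (hDφ x).differentiableAt) ?_
    intro x
    rw [(hDφ x).deriv]
    rw [sub_nonneg, div_le_one (pow_pos (hpos x) 2)]
    nlinarith [sq_nonneg (h' x)]
  have hφ0 : φ 0 = 0 := by
    simp [hφ, hh, hh', Real.sinh_zero, Real.cosh_zero]
  have hgmono : MonotoneOn g (Set.Ici 0) := by
    refine monotoneOn_of_deriv_nonneg (convex_Ici 0)
      (fun x _ => ((hDg x).differentiableAt.continuousAt).continuousWithinAt)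
      (fun x _ => (hDg x).differentiableAt.differentiableWithinAt) ?_
    intro x hx
    rw [interior_Ici] at hx
    rw [(hDg x).deriv]
    calc (0:ℝ) = φ 0 := hφ0.symm
      _ ≤ φ x := hφmono hx.le
  have hg0 : g 0 = 0 := by simp [hg, hh]
  have := hgmono (Set.self_mem_Ici) hs hs
  rw [hg0] at this
  have hlog : Real.log (h s) ≤ a * s + s ^ 2 / 2 := by
    simp only [hg] at this; linarith
  exact (Real.log_le_iff_le_exp (hpos s)).mp hlog

/-- pointwise convexity bound -/
lemma exp_mul_le_of_abs_le {x : ℝ} (hx : |x| ≤ 1) (s : ℝ) :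
    Real.exp (s * x) ≤ Real.cosh s + x * Real.sinh s := by
  obtain ⟨h1, h2⟩ := abs_le.mp hx
  have hθ1 : (0:ℝ) ≤ (1 - x) / 2 := by linarith
  have hθ2 : (0:ℝ) ≤ (1 + x) / 2 := by linarith
  have hsum : (1 - x) / 2 + (1 + x) / 2 = 1 := by ring
  have := convexOn_exp.2 (Set.mem_univ (-s)) (Set.mem_univ s) hθ1 hθ2 hsum
  simp only [smul_eq_mul] at this
  have harg : (1 - x) / 2 * (-s) + (1 + x) / 2 * s = s * x := by ring
  rw [harg] at this
  rw [Real.cosh_eq, Real.sinh_eq]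
  calc Real.exp (s * x) ≤ (1 - x) / 2 * Real.exp (-s) + (1 + x) / 2 * Real.exp s := this
    _ = (Real.exp s + Real.exp (-s)) / 2 + x * ((Real.exp s - Real.exp (-s)) / 2) := by ring

/-- for i.i.d. random vectors `Z, Z₁, …, Zₙ` on the unit sphere
`S^k ⊆ ℝ^{k+1}` with `𝔼Z ≠ 0`, `‖𝔼Z‖ > 1/(α n)` and `α ∈ (0,1)`, one has
`P(‖Z̄ₙ‖ ≤ 1/(α n)) ≤ exp(−(n/2)·(‖𝔼Z‖ − 1/(α n))²)`. -/
theorem prob_sample_mean_small_of_mean_nonzero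
    {k n : ℕ} (hn : 1 ≤ n)
    {Ω : Type*} [MeasurableSpace Ω] (μ : Measure Ω) [IsProbabilityMeasure μ]
    (Z0 : Ω → EuclideanSpace ℝ (Fin (k + 1)))
    (Z : Fin n → Ω → EuclideanSpace ℝ (Fin (k + 1)))
    (hZ0meas : Measurable Z0) (hZmeas : ∀ i, Measurable (Z i))
    (hindep : iIndepFun Z μ)
    (hident : ∀ i, IdentDistrib (Z i) Z0 μ μ)
    (hsphere : ∀ᵐ ω ∂μ, ‖Z0 ω‖ = 1)
    {α : ℝ} (hα : α ∈ Set.Ioo (0 : ℝ) 1)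
    (hmean : ∫ ω, Z0 ω ∂μ ≠ 0)
    (hlarge : 1 / (α * n) < ‖∫ ω, Z0 ω ∂μ‖) :
    μ {ω | ‖(n : ℝ)⁻¹ • ∑ i, Z i ω‖ ≤ 1 / (α * n)}
      ≤ ENNReal.ofReal
          (Real.exp (-(n / 2) * (‖∫ ω, Z0 ω ∂μ‖ - 1 / (α * n)) ^ 2)) := by
  have hnpos : (0:ℝ) < n := by exact_mod_cast hn
  set m : EuclideanSpace ℝ (Fin (k + 1)) := ∫ ω, Z0 ω ∂μ with hm
  set b : ℝ := ‖m‖ with hb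
  set t0 : ℝ := 1 / (α * n) with ht0
  have ht0pos : 0 < t0 := by
    rw [ht0]; exact div_pos one_pos (mul_pos hα.1 hnpos)
  have hbt : t0 < b := hlarge
  have hbpos : 0 < b := lt_trans ht0pos hbt
  -- norm of Z i is a.e. 1
  have hZnorm : ∀ i, ∀ᵐ ω ∂μ, ‖Z i ω‖ = 1 := by
    intro i
    have hsmeas : MeasurableSet {x : EuclideanSpace ℝ (Fin (k+1)) | ‖x‖ = 1} :=
      measurable_norm (measurableSet_singleton 1)
    have h0c : μ (Z0 ⁻¹' {x | ‖x‖ = 1})ᶜ = 0 := by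
      have h := hsphere
      rw [MeasureTheory.ae_iff] at h
      simpa [Set.preimage, Set.compl_setOf] using h
    have h0 : μ (Z0 ⁻¹' {x | ‖x‖ = 1}) = 1 :=
      (prob_compl_eq_zero_iff (hsmeas.preimage hZ0meas)).mp h0c
    have := (hident i).measure_mem_eq hsmeas
    rw [h0] at this
    have hc : μ (Z i ⁻¹' {x | ‖x‖ = 1})ᶜ = 0 := by
      rw [measure_compl ((hsmeas.preimage (hZmeas i))) (measure_ne_top _ _), this]
      simp
    exact (MeasureTheory.ae_iff (p := fun ω => ‖Z i ω‖ = 1)).mpr (by simpa [Set.compl_setOf] using hc)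
  -- unit vector and projections
  set u : EuclideanSpace ℝ (Fin (k + 1)) := b⁻¹ • m with hu
  have hunorm : ‖u‖ = 1 := by
    rw [hu, norm_smul, norm_inv, Real.norm_eq_abs, abs_of_pos hbpos, ← hb,
      inv_mul_cancel₀ hbpos.ne']
  set X : Fin n → Ω → ℝ := fun i ω => inner ℝ u (Z i ω) with hX
  have hXmeas : ∀ i, Measurable (X i) := fun i => measurable_const.inner (hZmeas i)
  have hXabs : ∀ i, ∀ᵐ ω ∂μ, |X i ω| ≤ 1 := by
    intro i
    filter_upwards [hZnorm i] with ω hω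
    calc |X i ω| ≤ ‖u‖ * ‖Z i ω‖ := abs_real_inner_le_norm u (Z i ω)
      _ = 1 := by rw [hunorm, hω, one_mul]
  -- integrability, mean of X i
  have hZint : ∀ i, Integrable (Z i) μ := by
    intro i
    refine Integrable.mono' (integrable_const 1) (hZmeas i).aestronglyMeasurable ?_
    filter_upwards [hZnorm i] with ω hω using le_of_eq hω
  have hXmean : ∀ i, ∫ ω, X i ω ∂μ = b := by
    intro i
    rw [hX]
    rw [integral_inner (hZint i) u, (hident i).integral_eq, ← hm, hu,
      real_inner_smul_left, real_inner_self_eq_norm_mul_norm, ← hb]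
    field_simp
  have hXint : ∀ i, Integrable (X i) μ := by
    intro i
    refine Integrable.mono' (integrable_const 1) ((hXmeas i).aestronglyMeasurable) ?_
    filter_upwards [hXabs i] with ω hω using hω
  -- integrability of exponentials
  have hexpint : ∀ (i : Fin n) (s : ℝ), Integrable (fun ω => Real.exp (s * X i ω)) μ := by
    intro i s
    refine Integrable.mono' (integrable_const (Real.exp |s|))
      (((hXmeas i).const_mul s).exp.aestronglyMeasurable) ?_
    filter_upwards [hXabs i] with ω hω
    rw [Real.norm_eq_abs, abs_of_pos (Real.exp_pos _), Real.exp_le_exp]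
    calc s * X i ω ≤ |s * X i ω| := le_abs_self _
      _ = |s| * |X i ω| := abs_mul s _
      _ ≤ |s| * 1 := by exact mul_le_mul_of_nonneg_left hω (abs_nonneg s)
      _ = |s| := mul_one _
  -- λ
  set lam : ℝ := b - t0 with hlam
  have hlampos : 0 < lam := by rw [hlam]; linarith
  -- b ≤ 1
  have hble : b ≤ 1 := by
    rw [hb, hm]
    calc ‖∫ ω, Z0 ω ∂μ‖ ≤ ∫ ω, ‖Z0 ω‖ ∂μ := norm_integral_le_integral_norm _
      _ = ∫ _ω, (1:ℝ) ∂μ := integral_congr_ae hsphere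
      _ = 1 := by simp
  -- mgf bound per coordinate
  have hmgf : ∀ i : Fin n, mgf (X i) μ (-lam) ≤ Real.exp (lam ^ 2 / 2 - lam * b) := by
    intro i
    have step1 : mgf (X i) μ (-lam) ≤ Real.cosh (-lam) + b * Real.sinh (-lam) := by
      rw [mgf]
      have hrhs : Integrable (fun ω => Real.cosh (-lam) + X i ω * Real.sinh (-lam)) μ :=
        (integrable_const _).add ((hXint i).mul_const _)
      calc ∫ ω, Real.exp (-lam * X i ω) ∂μ
          ≤ ∫ ω, (Real.cosh (-lam) + X i ω * Real.sinh (-lam)) ∂μ := by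
            refine integral_mono_ae (hexpint i (-lam)) hrhs ?_
            filter_upwards [hXabs i] with ω hω
            exact exp_mul_le_of_abs_le hω (-lam)
        _ = Real.cosh (-lam) + b * Real.sinh (-lam) := by
            rw [integral_add (integrable_const _) ((hXint i).mul_const _),
              integral_const, integral_mul_const, hXmean i]
            simp
    have step2 : Real.cosh (-lam) + b * Real.sinh (-lam)
        ≤ Real.exp ((-b) * lam + lam ^ 2 / 2) := by
      have habs : |(-b : ℝ)| ≤ 1 := by rw [abs_neg, abs_of_pos hbpos]; exact hble
      have := hoeff_aux habs hlampos.le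
      rw [Real.cosh_neg, Real.sinh_neg]
      calc Real.cosh lam + b * (-Real.sinh lam)
          = Real.cosh lam + (-b) * Real.sinh lam := by ring
        _ ≤ Real.exp ((-b) * lam + lam ^ 2 / 2) := this
    calc mgf (X i) μ (-lam) ≤ Real.exp ((-b) * lam + lam ^ 2 / 2) := step1.trans step2
      _ = Real.exp (lam ^ 2 / 2 - lam * b) := by ring_nf
  -- independence of X
  have hXindep : iIndepFun X μ :=
    hindep.comp (fun _ z => (inner ℝ u z : ℝ)) (fun _ => measurable_const.inner measurable_id)
  -- sum
  set S : Ω → ℝ := fun ω => ∑ i, X i ω with hS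
  have hSapp : ∀ ω, S ω = ∑ i, X i ω := fun ω => rfl
  have hSsum : S = ∑ i, X i := by funext ω; simp [hS, Finset.sum_apply]
  have hSexpint : Integrable (fun ω => Real.exp (-lam * S ω)) μ := by
    refine Integrable.mono' (integrable_const (Real.exp (lam * n)))
      (((Finset.measurable_sum Finset.univ fun i _ => hXmeas i).const_mul
        (-lam)).exp.aestronglyMeasurable) ?_
    have hall : ∀ᵐ ω ∂μ, ∀ i : Fin n, |X i ω| ≤ 1 := ae_all_iff.mpr hXabs
    filter_upwards [hall] with ω hω
    rw [Real.norm_eq_abs, abs_of_pos (Real.exp_pos _), Real.exp_le_exp, hSapp]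
    have h1 : -lam * ∑ i, X i ω ≤ |lam| * |∑ i, X i ω| := by
      calc -lam * ∑ i, X i ω ≤ |(-lam) * ∑ i, X i ω| := le_abs_self _
        _ = |lam| * |∑ i, X i ω| := by rw [abs_mul, abs_neg]
    have h2 : |∑ i, X i ω| ≤ (n : ℝ) := by
      calc |∑ i, X i ω| ≤ ∑ i, |X i ω| := Finset.abs_sum_le_sum_abs _ _
        _ ≤ ∑ _i : Fin n, (1:ℝ) := Finset.sum_le_sum fun i _ => hω i
        _ = n := by simp
    calc -lam * ∑ i, X i ω ≤ |lam| * |∑ i, X i ω| := h1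
      _ ≤ |lam| * n := mul_le_mul_of_nonneg_left h2 (abs_nonneg _)
      _ = lam * n := by rw [abs_of_pos hlampos]
  -- Chernoff
  have hchern : (μ {ω | S ω ≤ n * t0}).toReal
      ≤ Real.exp (lam * (n * t0)) * mgf S μ (-lam) := by
    have := measure_le_le_exp_mul_mgf (X := S) (μ := μ) (t := -lam) (n * t0)
      (neg_nonpos.mpr hlampos.le) hSexpint
    simpa [measureReal_def] using this
  have hmgfS : mgf S μ (-lam) ≤ Real.exp ((n : ℝ) * (lam ^ 2 / 2 - lam * b)) := by
    rw [hSsum, hXindep.mgf_sum hXmeas]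
    calc ∏ i, mgf (X i) μ (-lam) ≤ ∏ _i : Fin n, Real.exp (lam ^ 2 / 2 - lam * b) :=
          Finset.prod_le_prod (fun i _ => mgf_nonneg) (fun i _ => hmgf i)
      _ = Real.exp ((n : ℝ) * (lam ^ 2 / 2 - lam * b)) := by
          rw [Finset.prod_const, ← Real.exp_nat_mul]; simp
  -- event inclusion
  have hsub : {ω | ‖(n : ℝ)⁻¹ • ∑ i, Z i ω‖ ≤ t0} ⊆ {ω | S ω ≤ n * t0} := by
    intro ω hω
    simp only [Set.mem_setOf_eq] at hω ⊢
    have hnorm : ‖∑ i, Z i ω‖ = n * ‖(n : ℝ)⁻¹ • ∑ i, Z i ω‖ := by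
      rw [norm_smul, norm_inv, Real.norm_natCast]
      field_simp
    have h1 : S ω ≤ ‖∑ i, Z i ω‖ := by
      rw [hSapp]
      calc ∑ i, X i ω = inner ℝ u (∑ i, Z i ω) := by rw [hX]; simp [inner_sum]
        _ ≤ ‖u‖ * ‖∑ i, Z i ω‖ := real_inner_le_norm _ _
        _ = ‖∑ i, Z i ω‖ := by rw [hunorm, one_mul]
    calc S ω ≤ n * ‖(n : ℝ)⁻¹ • ∑ i, Z i ω‖ := by rw [← hnorm]; exact h1
      _ ≤ n * t0 := mul_le_mul_of_nonneg_left hω hnpos.le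
  -- combine
  have hfinal : (μ {ω | ‖(n : ℝ)⁻¹ • ∑ i, Z i ω‖ ≤ t0}).toReal
      ≤ Real.exp (-(n / 2) * (b - t0) ^ 2) := by
    have hmono : μ {ω | ‖(n : ℝ)⁻¹ • ∑ i, Z i ω‖ ≤ t0} ≤ μ {ω | S ω ≤ n * t0} :=
      measure_mono hsub
    have h1 : (μ {ω | ‖(n : ℝ)⁻¹ • ∑ i, Z i ω‖ ≤ t0}).toReal
        ≤ (μ {ω | S ω ≤ n * t0}).toReal :=
      ENNReal.toReal_mono (measure_ne_top _ _) hmono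
    calc (μ {ω | ‖(n : ℝ)⁻¹ • ∑ i, Z i ω‖ ≤ t0}).toReal
        ≤ (μ {ω | S ω ≤ n * t0}).toReal := h1
      _ ≤ Real.exp (lam * (n * t0)) * mgf S μ (-lam) := hchern
      _ ≤ Real.exp (lam * (n * t0)) * Real.exp ((n : ℝ) * (lam ^ 2 / 2 - lam * b)) := by
          exact mul_le_mul_of_nonneg_left hmgfS (Real.exp_pos _).le
      _ = Real.exp (lam * (n * t0) + (n : ℝ) * (lam ^ 2 / 2 - lam * b)) :=
          (Real.exp_add _ _).symm
      _ = Real.exp (-(n / 2) * (b - t0) ^ 2) := by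
          congr 1; rw [hlam]; ring
  calc μ {ω | ‖(n : ℝ)⁻¹ • ∑ i, Z i ω‖ ≤ t0}
      = ENNReal.ofReal (μ {ω | ‖(n : ℝ)⁻¹ • ∑ i, Z i ω‖ ≤ t0}).toReal :=
        (ENNReal.ofReal_toReal (measure_ne_top _ _)).symm
    _ ≤ ENNReal.ofReal (Real.exp (-(n / 2) * (b - t0) ^ 2)) :=
        ENNReal.ofReal_le_ofReal hfinal
end

section
/- Let A be a (d+1)×(d+1) complex Hermitian matrix with λ_m(A) − λ_{m+1}(A) ≥ √2·ε for some ε > 0. Then for every Hermitian matrix E with ‖E‖_F < ε, the matrix A + E satisfies λ_m(A+E) > λ_{m+1}(A+E); in particular the best approximation of every point of the Frobenius ball B_ε(A) by an element of M_m is unique. -/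
/-- The eigenvalues of a Hermitian complex matrix in decreasing order (with multiplicity);
junk value `0` for non-Hermitian matrices. -/
noncomputable def eigD {n : ℕ} (A : Matrix (Fin n) (Fin n) ℂ) : Fin n → ℝ :=
  if h : A.IsHermitian then fun i => h.eigenvalues (Tuple.sort h.eigenvalues i.rev) else 0

/-- The Frobenius norm of a complex matrix. -/
noncomputable def frobNorm {n : ℕ} (A : Matrix (Fin n) (Fin n) ℂ) : ℝ :=
  Real.sqrt (∑ i, ∑ j, ‖A i j‖ ^ 2)

/-- The Veronese–Whitney embedded Grassmannian `Gr(m, ℂ^{d+1})`: scaled rank-`m`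
orthogonal projections `(1/√m)·P`. -/
def grassmannVW (d m : ℕ) : Set (Matrix (Fin (d + 1)) (Fin (d + 1)) ℂ) :=
  {X | ∃ P : Matrix (Fin (d + 1)) (Fin (d + 1)) ℂ,
    P.IsHermitian ∧ P * P = P ∧ P.rank = m ∧ X = (Real.sqrt m)⁻¹ • P}

namespace GrassProof

open Matrix

variable {n : ℕ} {B E P : Matrix (Fin n) (Fin n) ℂ}

noncomputable def sperm (hB : B.IsHermitian) : Equiv.Perm (Fin n) :=
  Fin.revPerm.trans (Tuple.sort hB.eigenvalues)

lemma eigD_eq (hB : B.IsHermitian) (i : Fin n) :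
    eigD B i = hB.eigenvalues (sperm hB i) := by
  simp [eigD, hB, sperm]

lemma eigD_antitone (hB : B.IsHermitian) : Antitone (eigD B) := by
  intro i j hij
  rw [eigD_eq hB, eigD_eq hB]
  exact Tuple.monotone_sort hB.eigenvalues (Fin.rev_le_rev.2 hij)

noncomputable def sU (hB : B.IsHermitian) : Matrix (Fin n) (Fin n) ℂ :=
  hB.eigenvectorUnitary

lemma sU_star_mul (hB : B.IsHermitian) : star (sU hB) * sU hB = 1 :=
  Unitary.star_mul_self_of_mem hB.eigenvectorUnitary.2

lemma sU_mul_star (hB : B.IsHermitian) : sU hB * star (sU hB) = 1 :=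
  Unitary.mul_star_self_of_mem hB.eigenvectorUnitary.2

lemma spectral (hB : B.IsHermitian) :
    B = sU hB * diagonal (fun i => (hB.eigenvalues i : ℂ)) * star (sU hB) := by
  simpa [Function.comp_def, sU] using hB.spectral_theorem

lemma diag_form (hB : B.IsHermitian) :
    star (sU hB) * B * sU hB = diagonal (fun i => (hB.eigenvalues i : ℂ)) := by
  simpa [Function.comp_def, sU] using hB.conjStarAlgAut_star_eigenvectorUnitary

lemma dot_self_eq (v : Fin n → ℂ) :
    star v ⬝ᵥ v = ((∑ j, ‖v j‖ ^ 2 : ℝ) : ℂ) := by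
  push_cast
  rw [dotProduct]
  refine Finset.sum_congr rfl fun j _ => ?_
  simp only [Pi.star_apply]
  rw [mul_comm, Complex.star_def, Complex.mul_conj, Complex.normSq_eq_norm_sq]
  norm_cast

noncomputable def coords (hB : B.IsHermitian) (x : Fin n → ℂ) : Fin n → ℂ :=
  fun i => (star (sU hB) *ᵥ x) (sperm hB i)

lemma star_vecMul_sU (hB : B.IsHermitian) (x : Fin n → ℂ) :
    star x ᵥ* sU hB = star (star (sU hB) *ᵥ x) := by
  rw [star_mulVec]
  simp [Matrix.star_eq_conjTranspose]

lemma quad_eq (hB : B.IsHermitian) (x : Fin n → ℂ) :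
    (star x ⬝ᵥ (B *ᵥ x)).re = ∑ i, eigD B i * ‖coords hB x i‖ ^ 2 := by
  have h1 : star x ⬝ᵥ (B *ᵥ x)
      = ((∑ j, hB.eigenvalues j * ‖(star (sU hB) *ᵥ x) j‖ ^ 2 : ℝ) : ℂ) := by
    conv_lhs => rw [spectral hB]
    rw [← mulVec_mulVec, ← mulVec_mulVec, dotProduct_mulVec, star_vecMul_sU hB]
    push_cast
    rw [dotProduct]
    refine Finset.sum_congr rfl fun j _ => ?_
    rw [mulVec_diagonal]
    simp only [Pi.star_apply]
    have : star ((star (sU hB) *ᵥ x) j) * ((hB.eigenvalues j : ℂ) * (star (sU hB) *ᵥ x) j)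
        = (hB.eigenvalues j : ℂ) * ((star (sU hB) *ᵥ x) j * star ((star (sU hB) *ᵥ x) j)) := by
      ring
    rw [this, Complex.star_def, Complex.mul_conj, Complex.normSq_eq_norm_sq]
    norm_cast
  rw [h1, Complex.ofReal_re,
    ← Equiv.sum_comp (sperm hB) (fun j => hB.eigenvalues j * ‖(star (sU hB) *ᵥ x) j‖ ^ 2)]
  refine Finset.sum_congr rfl fun i _ => ?_
  rw [eigD_eq hB]
  rfl

lemma normsq_coords (hB : B.IsHermitian) (x : Fin n → ℂ) :
    ∑ i, ‖coords hB x i‖ ^ 2 = (star x ⬝ᵥ x).re := by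
  have h2 : star x ⬝ᵥ x = star (star (sU hB) *ᵥ x) ⬝ᵥ (star (sU hB) *ᵥ x) := by
    rw [← star_vecMul_sU hB, ← dotProduct_mulVec, mulVec_mulVec, sU_mul_star, one_mulVec]
  rw [h2, dot_self_eq, Complex.ofReal_re,
    ← Equiv.sum_comp (sperm hB) (fun j => ‖(star (sU hB) *ᵥ x) j‖ ^ 2)]
  rfl

lemma exists_ne_zero_forall {α : Type} [Fintype α]
    (φ : α → ((Fin n → ℂ) →ₗ[ℂ] ℂ)) (h : Fintype.card α < n) :
    ∃ x : Fin n → ℂ, x ≠ 0 ∧ ∀ a, φ a x = 0 := by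
  set L : (Fin n → ℂ) →ₗ[ℂ] (α → ℂ) := LinearMap.pi φ with hL
  have h1 := LinearMap.finrank_range_add_finrank_ker L
  rw [Module.finrank_pi, Fintype.card_fin] at h1
  have h2 : Module.finrank ℂ (LinearMap.range L) ≤ Fintype.card α := by
    have := Submodule.finrank_le (LinearMap.range L)
    rwa [Module.finrank_pi] at this
  have h3 : 0 < Module.finrank ℂ (LinearMap.ker L) := by omega
  have h4 : LinearMap.ker L ≠ ⊥ := by
    intro hbot
    rw [hbot, finrank_bot] at h3
    omega
  obtain ⟨x, hx, hx0⟩ := (Submodule.ne_bot_iff _).1 h4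
  exact ⟨x, hx0, fun a => congr_fun (LinearMap.mem_ker.1 hx) a⟩

lemma card_lt_subtype (m : ℕ) (hk : m ≤ n) :
    Fintype.card {i : Fin n // (i : ℕ) < m} = m := by
  have e : {i : Fin n // (i : ℕ) < m} ≃ Fin m :=
    { toFun := fun x => ⟨x.1.1, x.2⟩
      invFun := fun j => ⟨⟨j.1, lt_of_lt_of_le j.2 hk⟩, j.2⟩
      left_inv := fun x => by ext; rfl
      right_inv := fun j => rfl }
  rw [Fintype.card_congr e, Fintype.card_fin]

lemma card_gt_subtype (k : ℕ) (hk : k < n) :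
    Fintype.card {i : Fin n // k < (i : ℕ)} = n - (k + 1) := by
  have e : {i : Fin n // k < (i : ℕ)} ≃ Fin (n - (k + 1)) :=
    { toFun := fun x => ⟨x.1.1 - (k + 1), by omega⟩
      invFun := fun j => ⟨⟨j.1 + (k + 1), by omega⟩, by show k < j.1 + (k + 1); omega⟩
      left_inv := fun x => by
        ext
        have := x.2
        simp
        omega
      right_inv := fun j => by
        ext
        simp }
  rw [Fintype.card_congr e, Fintype.card_fin]

lemma dot_self_pos {x : Fin n → ℂ} (hx : x ≠ 0) : 0 < (star x ⬝ᵥ x).re := by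
  rw [dot_self_eq, Complex.ofReal_re]
  obtain ⟨j, hj⟩ := Function.ne_iff.1 hx
  exact Finset.sum_pos' (fun i _ => by positivity)
    ⟨j, Finset.mem_univ j, pow_pos (norm_pos_iff.mpr hj) 2⟩

lemma quad_ge_of_support (hB : B.IsHermitian) (k : Fin n) (x : Fin n → ℂ)
    (hx : ∀ i, k < i → coords hB x i = 0) :
    eigD B k * (star x ⬝ᵥ x).re ≤ (star x ⬝ᵥ (B *ᵥ x)).re := by
  rw [quad_eq hB, ← normsq_coords hB x, Finset.mul_sum]
  refine Finset.sum_le_sum fun i _ => ?_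
  by_cases h : k < i
  · simp [hx i h]
  · exact mul_le_mul_of_nonneg_right (eigD_antitone hB (le_of_not_gt h)) (by positivity)

lemma quad_le_of_support (hB : B.IsHermitian) (k : Fin n) (x : Fin n → ℂ)
    (hx : ∀ i, i < k → coords hB x i = 0) :
    (star x ⬝ᵥ (B *ᵥ x)).re ≤ eigD B k * (star x ⬝ᵥ x).re := by
  rw [quad_eq hB, ← normsq_coords hB x, Finset.mul_sum]
  refine Finset.sum_le_sum fun i _ => ?_
  by_cases h : i < k
  · simp [hx i h]
  · exact mul_le_mul_of_nonneg_right (eigD_antitone hB (le_of_not_gt h)) (by positivity)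

lemma quad_add (A E : Matrix (Fin n) (Fin n) ℂ) (x : Fin n → ℂ) :
    (star x ⬝ᵥ ((A + E) *ᵥ x)).re = (star x ⬝ᵥ (A *ᵥ x)).re + (star x ⬝ᵥ (E *ᵥ x)).re := by
  rw [add_mulVec, dotProduct_add, Complex.add_re]

lemma weyl_upper {A E : Matrix (Fin n) (Fin n) ℂ} (hA : A.IsHermitian) (hE : E.IsHermitian)
    (k : Fin n) :
    eigD (A + E) k ≤ eigD A k + eigD E ⟨0, k.pos⟩ := by
  have hB : (A + E).IsHermitian := hA.add hE
  obtain ⟨x, hx0, hxc⟩ := exists_ne_zero_forall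
    (α := {i : Fin n // (k : ℕ) < (i : ℕ)} ⊕ {i : Fin n // (i : ℕ) < (k : ℕ)})
    (Sum.elim
      (fun a => (LinearMap.proj (sperm hB a.1)).comp (mulVecLin (star (sU hB))))
      (fun a => (LinearMap.proj (sperm hA a.1)).comp (mulVecLin (star (sU hA)))))
    (by
      rw [Fintype.card_sum, card_gt_subtype (k : ℕ) k.isLt,
        card_lt_subtype (k : ℕ) (le_of_lt k.isLt)]
      have := k.isLt; omega)
  set N := (star x ⬝ᵥ x).re with hN
  have hNpos : 0 < N := dot_self_pos hx0
  have c1 : ∀ i : Fin n, (k : ℕ) < (i : ℕ) → coords hB x i = 0 := fun i hi => hxc (Sum.inl ⟨i, hi⟩)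
  have c2 : ∀ i : Fin n, (i : ℕ) < (k : ℕ) → coords hA x i = 0 := fun i hi => hxc (Sum.inr ⟨i, hi⟩)
  have h1 : eigD (A + E) k * N ≤ (star x ⬝ᵥ ((A + E) *ᵥ x)).re :=
    quad_ge_of_support hB k x (fun i hi => c1 i hi)
  have h2 : (star x ⬝ᵥ (A *ᵥ x)).re ≤ eigD A k * N :=
    quad_le_of_support hA k x (fun i hi => c2 i hi)
  have h3 : (star x ⬝ᵥ (E *ᵥ x)).re ≤ eigD E ⟨0, k.pos⟩ * N :=
    quad_le_of_support hE ⟨0, k.pos⟩ x (fun i hi => absurd hi (by simp [Fin.lt_def]))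
  rw [quad_add A E x] at h1
  exact le_of_mul_le_mul_right (by linarith) hNpos

lemma weyl_lower {A E : Matrix (Fin n) (Fin n) ℂ} (hA : A.IsHermitian) (hE : E.IsHermitian)
    (k : Fin n) :
    eigD A k + eigD E ⟨n - 1, Nat.sub_lt k.pos Nat.one_pos⟩ ≤ eigD (A + E) k := by
  have hB : (A + E).IsHermitian := hA.add hE
  obtain ⟨x, hx0, hxc⟩ := exists_ne_zero_forall
    (α := {i : Fin n // (k : ℕ) < (i : ℕ)} ⊕ {i : Fin n // (i : ℕ) < (k : ℕ)})
    (Sum.elim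
      (fun a => (LinearMap.proj (sperm hA a.1)).comp (mulVecLin (star (sU hA))))
      (fun a => (LinearMap.proj (sperm hB a.1)).comp (mulVecLin (star (sU hB)))))
    (by
      rw [Fintype.card_sum, card_gt_subtype (k : ℕ) k.isLt,
        card_lt_subtype (k : ℕ) (le_of_lt k.isLt)]
      have := k.isLt; omega)
  set N := (star x ⬝ᵥ x).re with hN
  have hNpos : 0 < N := dot_self_pos hx0
  have c1 : ∀ i : Fin n, (k : ℕ) < (i : ℕ) → coords hA x i = 0 := fun i hi => hxc (Sum.inl ⟨i, hi⟩)
  have c2 : ∀ i : Fin n, (i : ℕ) < (k : ℕ) → coords hB x i = 0 := fun i hi => hxc (Sum.inr ⟨i, hi⟩)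
  have h1 : eigD A k * N ≤ (star x ⬝ᵥ (A *ᵥ x)).re :=
    quad_ge_of_support hA k x (fun i hi => c1 i hi)
  have h2 : (star x ⬝ᵥ ((A + E) *ᵥ x)).re ≤ eigD (A + E) k * N :=
    quad_le_of_support hB k x (fun i hi => c2 i hi)
  have h3 : eigD E ⟨n - 1, Nat.sub_lt k.pos Nat.one_pos⟩ * N ≤ (star x ⬝ᵥ (E *ᵥ x)).re :=
    quad_ge_of_support hE ⟨n - 1, Nat.sub_lt k.pos Nat.one_pos⟩ x
      (fun i hi => absurd hi (by simp [Fin.lt_def]; omega))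
  rw [quad_add A E x] at h2
  exact le_of_mul_le_mul_right (by linarith) hNpos

lemma trace_conj_sU (hB : B.IsHermitian) (X : Matrix (Fin n) (Fin n) ℂ) :
    trace (sU hB * X * star (sU hB)) = trace X := by
  rw [trace_mul_comm, ← mul_assoc, sU_star_mul, one_mul]

noncomputable def rip (X Y : Matrix (Fin n) (Fin n) ℂ) : ℝ := (trace (Xᴴ * Y)).re

lemma rip_self_eq (X : Matrix (Fin n) (Fin n) ℂ) :
    rip X X = ∑ i, ∑ j, ‖X i j‖ ^ 2 := by
  rw [rip, trace]
  have : ∀ j, (Xᴴ * X).diag j = ((∑ i, ‖X i j‖ ^ 2 : ℝ) : ℂ) := by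
    intro j
    rw [diag, mul_apply]
    push_cast
    refine Finset.sum_congr rfl fun i _ => ?_
    rw [conjTranspose_apply, Complex.star_def, Complex.conj_mul']
  simp_rw [this]
  rw [← Complex.ofReal_sum, Complex.ofReal_re]
  exact Finset.sum_comm

lemma frobNorm_eq (X : Matrix (Fin n) (Fin n) ℂ) : frobNorm X = Real.sqrt (rip X X) := by
  rw [frobNorm, rip_self_eq]

lemma rip_self_nonneg (X : Matrix (Fin n) (Fin n) ℂ) : 0 ≤ rip X X := by
  rw [rip_self_eq]; positivity

lemma frobNorm_sq (X : Matrix (Fin n) (Fin n) ℂ) : frobNorm X ^ 2 = rip X X := by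
  rw [frobNorm_eq, Real.sq_sqrt (rip_self_nonneg X)]

lemma rip_comm (X Y : Matrix (Fin n) (Fin n) ℂ) : rip Y X = rip X Y := by
  have h : Yᴴ * X = (Xᴴ * Y)ᴴ := by
    rw [conjTranspose_mul, conjTranspose_conjTranspose]
  rw [rip, rip, h, trace_conjTranspose]
  simp

lemma rip_sub_expand (X Y : Matrix (Fin n) (Fin n) ℂ) :
    rip (X - Y) (X - Y) = rip X X - 2 * rip X Y + rip Y Y := by
  have key : (trace (Yᴴ * X)).re = (trace (Xᴴ * Y)).re := rip_comm X Y
  rw [rip, conjTranspose_sub, sub_mul, mul_sub, mul_sub, sub_sub_sub_comm]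
  simp only [trace_sub, Complex.sub_re]
  rw [rip, rip, rip, key]; ring

lemma sum_sq_eigD (hE : E.IsHermitian) : ∑ i, eigD E i ^ 2 = rip E E := by
  have hsq : Eᴴ * E = sU hE * diagonal (fun i => (hE.eigenvalues i : ℂ) * (hE.eigenvalues i : ℂ))
      * star (sU hE) := by
    rw [hE.eq]
    conv_lhs => rw [spectral hE]
    rw [← diagonal_mul_diagonal]
    set U := sU hE
    set D := diagonal (fun i => (hE.eigenvalues i : ℂ))
    calc U * D * star U * (U * D * star U) = U * (D * ((star U * U) * (D * star U))) := by
          noncomm_ring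
      _ = U * (D * D) * star U := by rw [sU_star_mul]; noncomm_ring
  rw [rip, hsq, trace_conj_sU, trace_diagonal]
  have h : (∑ i, (hE.eigenvalues i : ℂ) * (hE.eigenvalues i : ℂ))
      = ((∑ i, hE.eigenvalues i ^ 2 : ℝ) : ℂ) := by
    push_cast; ring_nf
  rw [h, Complex.ofReal_re, ← Equiv.sum_comp (sperm hE) (fun i => hE.eigenvalues i ^ 2)]
  exact Finset.sum_congr rfl fun i _ => by rw [eigD_eq hE]

lemma eigD_spread_le (hn : 2 ≤ n) (hE : E.IsHermitian) :
    eigD E ⟨0, by omega⟩ - eigD E ⟨n - 1, by omega⟩ ≤ Real.sqrt 2 * frobNorm E := by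
  set a := eigD E ⟨0, by omega⟩
  set b := eigD E ⟨n - 1, by omega⟩
  have hab : a ^ 2 + b ^ 2 ≤ rip E E := by
    rw [← sum_sq_eigD hE]
    have hsub : ({⟨0, by omega⟩, ⟨n - 1, by omega⟩} : Finset (Fin n)) ⊆ Finset.univ :=
      Finset.subset_univ _
    have hne : (⟨0, by omega⟩ : Fin n) ≠ ⟨n - 1, by omega⟩ := by
      intro h; rw [Fin.mk.injEq] at h; omega
    calc a ^ 2 + b ^ 2 = ∑ i ∈ ({⟨0, by omega⟩, ⟨n - 1, by omega⟩} : Finset (Fin n)),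
          eigD E i ^ 2 := by rw [Finset.sum_pair hne]
      _ ≤ ∑ i, eigD E i ^ 2 :=
          Finset.sum_le_sum_of_subset_of_nonneg hsub (fun i _ _ => by positivity)
  have h2 : (a - b) ^ 2 ≤ 2 * rip E E := by nlinarith [sq_nonneg (a + b), hab]
  calc a - b ≤ |a - b| := le_abs_self _
    _ = Real.sqrt ((a - b) ^ 2) := (Real.sqrt_sq_eq_abs _).symm
    _ ≤ Real.sqrt (2 * rip E E) := Real.sqrt_le_sqrt h2
    _ = Real.sqrt 2 * frobNorm E := by rw [Real.sqrt_mul (by norm_num), frobNorm_eq]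

lemma isUnit_det_sU (hB : B.IsHermitian) : IsUnit (sU hB).det := by
  apply IsUnit.of_mul_eq_one (star (sU hB)).det
  rw [← det_mul, sU_mul_star, det_one]

lemma isUnit_det_star_sU (hB : B.IsHermitian) : IsUnit (star (sU hB)).det := by
  apply IsUnit.of_mul_eq_one (sU hB).det
  rw [← det_mul, sU_star_mul, det_one]

lemma unconj_eq (hB : B.IsHermitian) {X Y : Matrix (Fin n) (Fin n) ℂ}
    (h : sU hB * X * star (sU hB) = sU hB * Y * star (sU hB)) : X = Y := by
  have h2 := congrArg (fun M => star (sU hB) * M * sU hB) h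
  have e : ∀ Z : Matrix (Fin n) (Fin n) ℂ,
      star (sU hB) * (sU hB * Z * star (sU hB)) * sU hB
        = (star (sU hB) * sU hB) * Z * (star (sU hB) * sU hB) := by
    intro Z; noncomm_ring
  rw [e, e, sU_star_mul] at h2
  simpa using h2

/-- trace of a Hermitian idempotent equals its rank -/
lemma trace_proj (hP : P.IsHermitian) (h2 : P * P = P) : trace P = (P.rank : ℂ) := by
  have hD : ∀ i, (hP.eigenvalues i : ℂ) * (hP.eigenvalues i : ℂ) = (hP.eigenvalues i : ℂ) := by
    intro i
    have hsq : P * P = sU hP * diagonal (fun i => (hP.eigenvalues i : ℂ) * (hP.eigenvalues i : ℂ))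
        * star (sU hP) := by
      conv_lhs => rw [spectral hP]
      rw [← diagonal_mul_diagonal]
      set U := sU hP
      set D := diagonal (fun i => (hP.eigenvalues i : ℂ))
      calc U * D * star U * (U * D * star U) = U * (D * ((star U * U) * (D * star U))) := by
            noncomm_ring
        _ = U * (D * D) * star U := by rw [sU_star_mul]; noncomm_ring
    rw [h2] at hsq
    conv_lhs at hsq => rw [spectral hP]
    have := unconj_eq hP hsq
    have := congrFun (congrFun this i) i
    simpa [diagonal_apply_eq] using this.symm
  have h01 : ∀ i, hP.eigenvalues i = 0 ∨ hP.eigenvalues i = 1 := by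
    intro i
    have : (hP.eigenvalues i : ℂ) * ((hP.eigenvalues i : ℂ) - 1) = 0 := by
      have := hD i; ring_nf; ring_nf at this; linear_combination this
    rcases mul_eq_zero.1 this with h | h
    · left; exact_mod_cast h
    · right; have : (hP.eigenvalues i : ℂ) = 1 := by linear_combination h
      exact_mod_cast this
  have htr : trace P = ∑ i, (hP.eigenvalues i : ℂ) := by
    conv_lhs => rw [spectral hP]
    rw [trace_conj_sU, trace_diagonal]
  rw [htr, hP.rank_eq_card_non_zero_eigs]
  classical
  rw [Fintype.card_subtype]
  rw [← Finset.sum_boole]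
  refine Finset.sum_congr rfl fun i _ => ?_
  rcases h01 i with h | h <;> simp [h]



/-- indicator (in unsorted coordinates) of the top-m sorted eigenvalues -/
noncomputable def gfun (m : ℕ) (hB : B.IsHermitian) : Fin n → ℂ :=
  fun j => if ((sperm hB).symm j : ℕ) < m then 1 else 0

noncomputable def P0 (m : ℕ) (hB : B.IsHermitian) : Matrix (Fin n) (Fin n) ℂ :=
  sU hB * diagonal (gfun m hB) * star (sU hB)

lemma gfun_star (m : ℕ) (hB : B.IsHermitian) : star (gfun m hB) = gfun m hB := by
  funext j
  unfold gfun
  by_cases h : ((sperm hB).symm j : ℕ) < m <;> simp [h]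

lemma gfun_mul_self (m : ℕ) (hB : B.IsHermitian) :
    (fun j => gfun m hB j * gfun m hB j) = gfun m hB := by
  funext j
  unfold gfun
  by_cases h : ((sperm hB).symm j : ℕ) < m <;> simp [h]

lemma P0_isHermitian (m : ℕ) (hB : B.IsHermitian) : (P0 m hB).IsHermitian := by
  unfold Matrix.IsHermitian P0
  rw [conjTranspose_mul, conjTranspose_mul, star_eq_conjTranspose, conjTranspose_conjTranspose,
    diagonal_conjTranspose, mul_assoc]
  rw [gfun_star]

lemma P0_idem (m : ℕ) (hB : B.IsHermitian) : P0 m hB * P0 m hB = P0 m hB := by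
  unfold P0
  set U := sU hB
  set D := diagonal (gfun m hB)
  have : U * D * star U * (U * D * star U) = U * (D * ((star U * U) * (D * star U))) := by
    noncomm_ring
  rw [this, sU_star_mul]
  have : (U : Matrix (Fin n) (Fin n) ℂ) * (D * (1 * (D * star U))) = U * (D * D) * star U := by
    noncomm_ring
  rw [this, diagonal_mul_diagonal, gfun_mul_self]

lemma P0_rank (m : ℕ) (hB : B.IsHermitian) (hmn : m ≤ n) : (P0 m hB).rank = m := by
  unfold P0
  rw [rank_mul_eq_left_of_isUnit_det _ _ (isUnit_det_star_sU hB),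
    rank_mul_eq_right_of_isUnit_det _ _ (isUnit_det_sU hB)]
  classical
  rw [rank_diagonal]
  have e : {j // gfun m hB j ≠ 0} ≃ {i : Fin n // (i : ℕ) < m} := by
    refine Equiv.subtypeEquiv (sperm hB).symm fun j => ?_
    unfold gfun
    by_cases h : ((sperm hB).symm j : ℕ) < m <;> simp [h]
  rw [Fintype.card_congr e, card_lt_subtype m hmn]

lemma trace_B_P0 (m : ℕ) (hB : B.IsHermitian) :
    (trace (B * P0 m hB)).re = ∑ i : Fin n, (if (i : ℕ) < m then eigD B i else 0) := by
  have h1 : B * P0 m hB = sU hB *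
      (diagonal (fun i => (hB.eigenvalues i : ℂ)) * diagonal (gfun m hB)) * star (sU hB) := by
    rw [← diag_form hB]
    unfold P0
    set U := sU hB
    set G := diagonal (gfun m hB)
    calc B * (U * G * star U) = (U * star U) * B * (U * G * star U) := by
          rw [sU_mul_star, one_mul]
      _ = U * (star U * B * U * G) * star U := by noncomm_ring
  rw [h1, trace_conj_sU, diagonal_mul_diagonal, trace_diagonal]
  have h2 : ∀ j, (hB.eigenvalues j : ℂ) * gfun m hB j
      = (((if ((sperm hB).symm j : ℕ) < m then hB.eigenvalues j else 0 : ℝ)) : ℂ) := by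
    intro j
    unfold gfun
    by_cases h : ((sperm hB).symm j : ℕ) < m <;> simp [h]
  simp_rw [h2]
  rw [← Complex.ofReal_sum, Complex.ofReal_re,
    ← Equiv.sum_comp (sperm hB) (fun j => if ((sperm hB).symm j : ℕ) < m then hB.eigenvalues j else 0)]
  refine Finset.sum_congr rfl fun i _ => ?_
  rw [Equiv.symm_apply_apply]
  by_cases h : (i : ℕ) < m <;> simp [h, eigD_eq hB]


lemma sum_ite_one (m : ℕ) (hmn : m ≤ n) :
    ∑ i : Fin n, (if (i : ℕ) < m then (1 : ℝ) else 0) = m := by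
  classical
  rw [Finset.sum_boole]
  rw [← Fintype.card_subtype, card_lt_subtype m hmn]

lemma kyfan_real {μ e : Fin n → ℝ} {m : ℕ} (hm : 1 ≤ m) (hmn : m < n) (hμ : Antitone μ)
    (he0 : ∀ i, 0 ≤ e i) (he1 : ∀ i, e i ≤ 1) (hsum : ∑ i, e i = m) :
    (∑ i, μ i * e i ≤ ∑ i : Fin n, (if (i : ℕ) < m then μ i else 0)) ∧
    (μ ⟨m, hmn⟩ < μ ⟨m - 1, by omega⟩ →
      ∑ i, μ i * e i = ∑ i : Fin n, (if (i : ℕ) < m then μ i else 0) →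
      ∀ i, e i = if (i : ℕ) < m then 1 else 0) := by
  classical
  set c := μ ⟨m, hmn⟩ with hc
  set ψ : Fin n → ℝ := fun i => (μ i - c) * (e i - if (i : ℕ) < m then 1 else 0) with hψ
  have hψ_nonpos : ∀ i, ψ i ≤ 0 := by
    intro i
    by_cases h : (i : ℕ) < m
    · have h1 : c ≤ μ i := hμ (by simp [Fin.le_def]; omega)
      have h2 : e i - 1 ≤ 0 := by linarith [he1 i]
      simp only [hψ, h, if_pos]
      exact mul_nonpos_of_nonneg_of_nonpos (by linarith) h2
    · have h1 : μ i ≤ c := hμ (by simp [Fin.le_def]; omega)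
      simp only [hψ, h, if_neg, not_false_iff]
      have := he0 i
      exact mul_nonpos_of_nonpos_of_nonneg (by linarith) (by linarith)
  have hψ_sum : ∑ i, ψ i = ∑ i, μ i * e i - ∑ i : Fin n, (if (i : ℕ) < m then μ i else 0) := by
    have point : ∀ i : Fin n, ψ i = μ i * e i - c * e i
        - (if (i : ℕ) < m then μ i else 0) + (if (i : ℕ) < m then c else 0) := by
      intro i
      by_cases h : (i : ℕ) < m <;> simp [hψ, h] <;> ring
    rw [Finset.sum_congr rfl fun i _ => point i]
    have hci : ∑ i : Fin n, (if (i : ℕ) < m then c else 0) = c * m := by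
      have : ∀ i : Fin n, (if (i : ℕ) < m then c else 0)
          = c * (if (i : ℕ) < m then (1 : ℝ) else 0) := by
        intro i; by_cases h : (i : ℕ) < m <;> simp [h]
      rw [Finset.sum_congr rfl fun i _ => this i, ← Finset.mul_sum,
        sum_ite_one m (le_of_lt hmn)]
    simp only [Finset.sum_add_distrib, Finset.sum_sub_distrib, hci, ← Finset.mul_sum, hsum]
    ring
  constructor
  · have : ∑ i, ψ i ≤ 0 := Finset.sum_nonpos fun i _ => hψ_nonpos i
    linarith [hψ_sum]
  · intro hgap heq
    have hz : ∑ i, ψ i = 0 := by rw [hψ_sum, heq]; ring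
    have hall : ∀ i ∈ Finset.univ, ψ i = 0 :=
      (Finset.sum_eq_zero_iff_of_nonpos fun i _ => hψ_nonpos i).1 hz
    have hlt : ∀ i : Fin n, (i : ℕ) < m → e i = 1 := by
      intro i hi
      have hψi := hall i (Finset.mem_univ i)
      have hgt : 0 < μ i - c := by
        have : μ ⟨m - 1, by omega⟩ ≤ μ i := hμ (by simp [Fin.le_def]; omega)
        linarith
      simp only [hψ, hi, if_pos] at hψi
      rcases mul_eq_zero.1 hψi with h | h
      · linarith
      · linarith
    intro i
    -- second sum argument: all terms of e - ite vanish
    have key : ∀ j ∈ Finset.univ, (0 : ℝ) ≤ e j - (if (j : ℕ) < m then 1 else 0) := by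
      intro j _
      by_cases h : (j : ℕ) < m
      · simp [h, hlt j h]
      · simpa [h] using he0 j
    have hzero : ∑ j, (e j - if (j : ℕ) < m then (1 : ℝ) else 0) = 0 := by
      rw [Finset.sum_sub_distrib, hsum, sum_ite_one m (le_of_lt hmn)]
      ring
    have := (Finset.sum_eq_zero_iff_of_nonneg key).1 hzero i (Finset.mem_univ i)
    linarith [this]

lemma kyfan_main (hB : B.IsHermitian) {m : ℕ} (hm : 1 ≤ m) (hmn : m < n)
    (hP : P.IsHermitian) (h2 : P * P = P) (hrk : P.rank = m) :
    ((trace (B * P)).re ≤ ∑ i : Fin n, (if (i : ℕ) < m then eigD B i else 0)) ∧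
    (eigD B ⟨m, hmn⟩ < eigD B ⟨m - 1, by omega⟩ →
      (trace (B * P)).re = ∑ i : Fin n, (if (i : ℕ) < m then eigD B i else 0) →
      P = P0 m hB) := by
  classical
  set U := sU hB with hU
  set Q := star U * P * U with hQ
  have hQh : Q.IsHermitian := by
    unfold Matrix.IsHermitian
    rw [hQ, conjTranspose_mul, conjTranspose_mul, star_eq_conjTranspose,
      conjTranspose_conjTranspose, hP.eq, mul_assoc]
  have hQ2 : Q * Q = Q := by
    calc Q * Q = star U * (P * ((U * star U) * (P * U))) := by rw [hQ]; noncomm_ring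
      _ = star U * (P * P) * U := by rw [sU_mul_star]; noncomm_ring
      _ = Q := by rw [h2, hQ]
  have hPQ : P = U * Q * star U := by
    calc P = 1 * P * 1 := by simp
      _ = (U * star U) * P * (U * star U) := by rw [sU_mul_star]
      _ = U * Q * star U := by rw [hQ]; noncomm_ring
  have htrQ : trace Q = (m : ℂ) := by
    rw [hQ, trace_mul_comm, ← mul_assoc, sU_mul_star, one_mul, trace_proj hP h2, hrk]
  have htr : trace (B * P) = ∑ j, (hB.eigenvalues j : ℂ) * Q j j := by
    have h1 : B * P = U * (diagonal (fun i => (hB.eigenvalues i : ℂ)) * Q) * star U := by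
      calc B * P = B * (U * Q * star U) := by rw [← hPQ]
        _ = (U * star U) * B * (U * Q * star U) := by rw [sU_mul_star, one_mul]
        _ = U * ((star U * B * U) * Q) * star U := by noncomm_ring
        _ = U * (diagonal (fun i => (hB.eigenvalues i : ℂ)) * Q) * star U := by
            rw [diag_form hB]
    rw [h1, trace_conj_sU, trace]
    refine Finset.sum_congr rfl fun j _ => ?_
    rw [diag, diagonal_mul]
  have hdiag : ∀ j, Q j j = ((∑ k, ‖Q j k‖ ^ 2 : ℝ) : ℂ) := by
    intro j
    conv_lhs => rw [← hQ2]
    rw [mul_apply]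
    push_cast
    refine Finset.sum_congr rfl fun k _ => ?_
    have hk : Q k j = star (Q j k) := by
      conv_lhs => rw [← hQh]
      rw [conjTranspose_apply]
    rw [hk, Complex.star_def, Complex.mul_conj, Complex.normSq_eq_norm_sq]
    norm_cast
  set r : Fin n → ℝ := fun j => (Q j j).re with hr
  have hrsum : ∀ j, r j = ∑ k, ‖Q j k‖ ^ 2 := by
    intro j
    have h' : r j = (Q j j).re := rfl
    rw [h', hdiag j, Complex.ofReal_re]
  have hQr : ∀ j, Q j j = ((r j : ℝ) : ℂ) := by
    intro j; rw [hdiag j, hrsum j]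
  have hr0 : ∀ j, 0 ≤ r j := fun j => by rw [hrsum]; positivity
  have hr1 : ∀ j, r j ≤ 1 := by
    intro j
    have h1 : ‖Q j j‖ ^ 2 ≤ r j := by
      rw [hrsum j]
      exact Finset.single_le_sum (f := fun k => ‖Q j k‖ ^ 2) (fun k _ => by positivity) (Finset.mem_univ j)
    rw [hQr j] at h1
    simp only [Complex.norm_real, Real.norm_eq_abs, abs_of_nonneg (hr0 j)] at h1
    nlinarith [hr0 j]
  have hsumr : ∑ j, r j = m := by
    have : (trace Q).re = (m : ℝ) := by rw [htrQ]; simp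
    rw [trace] at this
    rw [← this, Complex.re_sum]
    rfl
  set e : Fin n → ℝ := fun i => r (sperm hB i) with he
  have htrRe : (trace (B * P)).re = ∑ i, eigD B i * e i := by
    rw [htr]
    have : ∀ j, (hB.eigenvalues j : ℂ) * Q j j = ((hB.eigenvalues j * r j : ℝ) : ℂ) := by
      intro j; rw [hQr j]; push_cast; ring
    simp_rw [this]
    rw [← Complex.ofReal_sum, Complex.ofReal_re,
      ← Equiv.sum_comp (sperm hB) (fun j => hB.eigenvalues j * r j)]
    exact Finset.sum_congr rfl fun i _ => by rw [eigD_eq hB]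
  have hesum : ∑ i, e i = m := by
    rw [he, Equiv.sum_comp (sperm hB) r, hsumr]
  obtain ⟨hle, heqc⟩ := kyfan_real hm hmn (eigD_antitone hB)
    (fun i => hr0 _) (fun i => hr1 _) hesum
  constructor
  · rw [htrRe]; exact hle
  · intro hgap heq
    have hee : ∀ i, e i = if (i : ℕ) < m then 1 else 0 := heqc hgap (by rw [← htrRe, heq])
    have hrg : ∀ j, r j = if ((sperm hB).symm j : ℕ) < m then 1 else 0 := by
      intro j
      have h' := hee ((sperm hB).symm j)
      simp only [he, Equiv.apply_symm_apply] at h'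
      exact h'
    have hQdiag : Q = diagonal (gfun m hB) := by
      ext j k
      by_cases hjm : ((sperm hB).symm j : ℕ) < m
      · -- r j = 1
        have hrj : r j = 1 := by rw [hrg j, if_pos hjm]
        by_cases hjk : j = k
        · subst hjk
          rw [hQr j, hrj, diagonal_apply_eq]
          unfold gfun
          rw [if_pos hjm]
          norm_num
        · have hsum0 : ∑ k' ∈ Finset.univ.erase j, ‖Q j k'‖ ^ 2 = 0 := by
            have hs := hrsum j
            rw [← Finset.add_sum_erase Finset.univ _ (Finset.mem_univ j)] at hs
            rw [hQr j] at hs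
            simp only [Complex.norm_real, Real.norm_eq_abs, abs_of_nonneg (hr0 j), hrj] at hs
            have habs1 : |(1 : ℝ)| ^ 2 = 1 := by norm_num
            rw [habs1] at hs
            linarith [hs]
          have := (Finset.sum_eq_zero_iff_of_nonneg
            (fun k' _ => by positivity)).1 hsum0 k (Finset.mem_erase.2 ⟨Ne.symm hjk, Finset.mem_univ k⟩)
          rw [diagonal_apply_ne _ hjk]
          have : ‖Q j k‖ = 0 := by nlinarith [norm_nonneg (Q j k), this]
          simpa using this
      · -- r j = 0 : whole row vanishes
        have hrj : r j = 0 := by rw [hrg j, if_neg hjm]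
        have hsum0 : ∑ k', ‖Q j k'‖ ^ 2 = 0 := by rw [← hrsum j, hrj]
        have hall := (Finset.sum_eq_zero_iff_of_nonneg (fun k' _ => by positivity)).1 hsum0
        have hQjk : Q j k = 0 := by
          have := hall k (Finset.mem_univ k)
          have : ‖Q j k‖ = 0 := by nlinarith [norm_nonneg (Q j k), this]
          simpa using this
        rw [hQjk]
        by_cases hjk : j = k
        · subst hjk
          rw [diagonal_apply_eq]
          unfold gfun
          rw [if_neg hjm]
        · rw [diagonal_apply_ne _ hjk]
    rw [hPQ, hQdiag]
    rfl

lemma rip_smul_right (X Y : Matrix (Fin n) (Fin n) ℂ) (s : ℝ) :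
    rip X (s • Y) = s * rip X Y := by
  rw [rip, Matrix.mul_smul, trace_smul, rip]
  simp [Complex.real_smul]

lemma rip_smul_left (X Y : Matrix (Fin n) (Fin n) ℂ) (s : ℝ) :
    rip (s • X) Y = s * rip X Y := by
  rw [rip_comm, rip_smul_right, rip_comm]

lemma rip_proj_self {P : Matrix (Fin n) (Fin n) ℂ} (hP : P.IsHermitian) (h2 : P * P = P)
    {m : ℕ} (hrk : P.rank = m) : rip P P = m := by
  rw [rip, hP.eq, h2, trace_proj hP h2, hrk]
  simp

lemma rip_B_proj (hB : B.IsHermitian) (P : Matrix (Fin n) (Fin n) ℂ) :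
    rip B P = (trace (B * P)).re := by
  rw [rip, hB.eq]


lemma frobNorm_nonneg (X : Matrix (Fin n) (Fin n) ℂ) : 0 ≤ frobNorm X := by
  rw [frobNorm_eq]; exact Real.sqrt_nonneg _

lemma frobNorm_le_of_sq (X Y : Matrix (Fin n) (Fin n) ℂ)
    (h : frobNorm X ^ 2 ≤ frobNorm Y ^ 2) : frobNorm X ≤ frobNorm Y := by
  nlinarith [frobNorm_nonneg X, frobNorm_nonneg Y, h]


end GrassProof

/-- if `A` is Hermitian with eigenvalue gap `λ_m(A) − λ_{m+1}(A) ≥ √2·ε`,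
then every Hermitian perturbation `A + E` with `‖E‖_F < ε` still has `λ_m > λ_{m+1}`;
in particular every point of the Frobenius ball `B_ε(A)` has a unique best approximation
in the embedded Grassmannian `M_m`. -/
theorem unique_projection_on_ball
    {d m : ℕ} (hm : 1 ≤ m) (hmd : m < d + 1)
    (A : Matrix (Fin (d + 1)) (Fin (d + 1)) ℂ) (hA : A.IsHermitian)
    {ε : ℝ} (hε : 0 < ε)
    (hgap : Real.sqrt 2 * ε ≤ eigD A ⟨m - 1, by omega⟩ - eigD A ⟨m, hmd⟩) :
    ∀ E : Matrix (Fin (d + 1)) (Fin (d + 1)) ℂ, E.IsHermitian → frobNorm E < ε →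
      eigD (A + E) ⟨m, hmd⟩ < eigD (A + E) ⟨m - 1, by omega⟩ ∧
      ∃! ν : Matrix (Fin (d + 1)) (Fin (d + 1)) ℂ,
        ν ∈ grassmannVW d m ∧
        ∀ ν' ∈ grassmannVW d m, frobNorm (A + E - ν) ≤ frobNorm (A + E - ν') := by
  intro E hE hfe
  have hB : (A + E).IsHermitian := hA.add hE
  have hn2 : 2 ≤ d + 1 := by omega
  have h1 : eigD (A + E) ⟨m, hmd⟩ ≤ eigD A ⟨m, hmd⟩ + eigD E ⟨0, by omega⟩ :=
    GrassProof.weyl_upper hA hE ⟨m, hmd⟩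
  have h2 : eigD A ⟨m - 1, by omega⟩ + eigD E ⟨d + 1 - 1, by omega⟩
      ≤ eigD (A + E) ⟨m - 1, by omega⟩ :=
    GrassProof.weyl_lower hA hE ⟨m - 1, by omega⟩
  have h3 : eigD E ⟨0, by omega⟩ - eigD E ⟨d + 1 - 1, by omega⟩ ≤ Real.sqrt 2 * frobNorm E :=
    GrassProof.eigD_spread_le hn2 hE
  have h4 : Real.sqrt 2 * frobNorm E < Real.sqrt 2 * ε :=
    mul_lt_mul_of_pos_left hfe (by positivity)
  have part1 : eigD (A + E) ⟨m, hmd⟩ < eigD (A + E) ⟨m - 1, by omega⟩ := by linarith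
  refine ⟨part1, ?_⟩
  have hmR : (0 : ℝ) < (m : ℝ) := by exact_mod_cast hm
  have hspos : (0 : ℝ) < (Real.sqrt m)⁻¹ := by positivity
  have hs2 : ((Real.sqrt m)⁻¹) ^ 2 * (m : ℝ) = 1 := by
    rw [← Real.sqrt_inv, Real.sq_sqrt (by positivity)]
    field_simp
  have hgapB : eigD (A + E) ⟨m, hmd⟩ < eigD (A + E) ⟨m - 1, by omega⟩ := part1
  have hKF0 : (Matrix.trace ((A + E) * GrassProof.P0 m hB)).re
      = ∑ i : Fin (d + 1), (if (i : ℕ) < m then eigD (A + E) i else 0) :=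
    GrassProof.trace_B_P0 m hB
  have hdist : ∀ P : Matrix (Fin (d + 1)) (Fin (d + 1)) ℂ,
      P.IsHermitian → P * P = P → P.rank = m →
      frobNorm (A + E - (Real.sqrt m)⁻¹ • P) ^ 2
        = GrassProof.rip (A + E) (A + E)
          - 2 * ((Real.sqrt m)⁻¹ * (Matrix.trace ((A + E) * P)).re) + 1 := by
    intro P hP hP2 hPrk
    have hνν : GrassProof.rip ((Real.sqrt m)⁻¹ • P) ((Real.sqrt m)⁻¹ • P) = 1 := by
      rw [GrassProof.rip_smul_right, GrassProof.rip_smul_left,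
        GrassProof.rip_proj_self hP hP2 hPrk]
      rw [show ((Real.sqrt m)⁻¹ * ((Real.sqrt m)⁻¹ * (m : ℝ)))
        = ((Real.sqrt m)⁻¹) ^ 2 * (m : ℝ) by ring, hs2]
    rw [GrassProof.frobNorm_sq, GrassProof.rip_sub_expand, GrassProof.rip_smul_right,
      GrassProof.rip_B_proj hB P, hνν]
  have hmem0 : (Real.sqrt m)⁻¹ • GrassProof.P0 m hB ∈ grassmannVW d m :=
    ⟨GrassProof.P0 m hB, GrassProof.P0_isHermitian m hB, GrassProof.P0_idem m hB,
      GrassProof.P0_rank m hB (le_of_lt hmd), rfl⟩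
  have hopt : ∀ ν' ∈ grassmannVW d m,
      frobNorm (A + E - (Real.sqrt m)⁻¹ • GrassProof.P0 m hB) ≤ frobNorm (A + E - ν') := by
    rintro ν' ⟨P', hP', h2', hrk', rfl⟩
    apply GrassProof.frobNorm_le_of_sq
    rw [hdist _ (GrassProof.P0_isHermitian m hB) (GrassProof.P0_idem m hB)
      (GrassProof.P0_rank m hB (le_of_lt hmd)), hdist _ hP' h2' hrk']
    have hle : (Matrix.trace ((A + E) * P')).re
        ≤ (Matrix.trace ((A + E) * GrassProof.P0 m hB)).re := by
      rw [hKF0]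
      exact (GrassProof.kyfan_main hB hm hmd hP' h2' hrk').1
    nlinarith [hspos, hle]
  refine ⟨(Real.sqrt m)⁻¹ • GrassProof.P0 m hB, ⟨hmem0, hopt⟩, ?_⟩
  rintro ν' ⟨⟨P', hP', h2', hrk', rfl⟩, hmin⟩
  have e1 : frobNorm (A + E - (Real.sqrt m)⁻¹ • P')
      ≤ frobNorm (A + E - (Real.sqrt m)⁻¹ • GrassProof.P0 m hB) :=
    hmin _ hmem0
  have e2 : frobNorm (A + E - (Real.sqrt m)⁻¹ • GrassProof.P0 m hB)
      ≤ frobNorm (A + E - (Real.sqrt m)⁻¹ • P') :=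
    hopt _ ⟨P', hP', h2', hrk', rfl⟩
  have heqf : frobNorm (A + E - (Real.sqrt m)⁻¹ • P')
      = frobNorm (A + E - (Real.sqrt m)⁻¹ • GrassProof.P0 m hB) := le_antisymm e1 e2
  have heqsq : frobNorm (A + E - (Real.sqrt m)⁻¹ • P') ^ 2
      = frobNorm (A + E - (Real.sqrt m)⁻¹ • GrassProof.P0 m hB) ^ 2 := by rw [heqf]
  rw [hdist _ hP' h2' hrk', hdist _ (GrassProof.P0_isHermitian m hB) (GrassProof.P0_idem m hB)
    (GrassProof.P0_rank m hB (le_of_lt hmd))] at heqsq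
  have htr : (Matrix.trace ((A + E) * P')).re
      = (Matrix.trace ((A + E) * GrassProof.P0 m hB)).re :=
    mul_left_cancel₀ (ne_of_gt hspos) (by linarith)
  have hP'eq : P' = GrassProof.P0 m hB :=
    (GrassProof.kyfan_main hB hm hmd hP' h2' hrk').2 hgapB (by rw [htr, hKF0])
  rw [hP'eq]
end

section
/- (Wielandt–Hoffman inequality for Hermitian matrices) Let A and B be (d+1)×(d+1) complex Hermitian matrices. Then ∑_{i=1}^{d+1} (λ_i(A) − λ_i(B))² ≤ ‖A − B‖_F². -/
open Matrix Finset in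
private theorem wh_trace_formula {m : ℕ} (A B : Matrix (Fin m) (Fin m) ℂ)
    (hA : A.IsHermitian) (hB : B.IsHermitian) :
    Matrix.trace (A * B) =
      ((∑ i, ∑ j, hA.eigenvalues i * hB.eigenvalues j *
        ‖(star (hA.eigenvectorUnitary : Matrix (Fin m) (Fin m) ℂ) *
          (hB.eigenvectorUnitary : Matrix (Fin m) (Fin m) ℂ)) i j‖ ^ 2 : ℝ) : ℂ) := by
  set U := (hA.eigenvectorUnitary : Matrix (Fin m) (Fin m) ℂ)
  set V := (hB.eigenvectorUnitary : Matrix (Fin m) (Fin m) ℂ)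
  set W := star U * V with hW
  set D : Matrix (Fin m) (Fin m) ℂ := Matrix.diagonal (RCLike.ofReal ∘ hA.eigenvalues) with hD
  set E : Matrix (Fin m) (Fin m) ℂ := Matrix.diagonal (RCLike.ofReal ∘ hB.eigenvalues) with hE
  have hU : U * star U = 1 := Matrix.mem_unitaryGroup_iff.mp hA.eigenvectorUnitary.2
  have key : Matrix.trace (A * B) = Matrix.trace (D * (W * E * star W)) := by
    conv_lhs => rw [hA.spectral_theorem, hB.spectral_theorem]
    rw [Unitary.conjStarAlgAut_apply, Unitary.conjStarAlgAut_apply]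
    rw [show U * D * star U * (V * E * star V) = U * (D * (W * E * star W)) * star U by
      simp only [hW, Matrix.star_mul, star_star, Matrix.mul_assoc, hU, Matrix.mul_one]]
    rw [Matrix.trace_mul_cycle, ← Matrix.mul_assoc,
      Matrix.mem_unitaryGroup_iff'.mp hA.eigenvectorUnitary.2, Matrix.one_mul]
  rw [key, Matrix.trace, Complex.ofReal_sum]
  refine Finset.sum_congr rfl fun i _ => ?_
  have h1 : (D * (W * E * star W)).diag i
      = (hA.eigenvalues i : ℂ) * ∑ j, W i j * (hB.eigenvalues j : ℂ) * star (W i j) := by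
    rw [Matrix.diag_apply, hD, Matrix.diagonal_mul]
    congr 1
    rw [Matrix.mul_apply]
    refine Finset.sum_congr rfl fun j _ => ?_
    rw [Matrix.mul_diagonal, Matrix.star_apply, Function.comp_apply]; norm_cast
  rw [h1, Complex.ofReal_sum, Finset.mul_sum]
  refine Finset.sum_congr rfl fun j _ => ?_
  have h2 : W i j * star (W i j) = ((‖W i j‖ : ℂ)) ^ 2 := RCLike.mul_conj (W i j)
  push_cast
  rw [show (hA.eigenvalues i : ℂ) * (W i j * (hB.eigenvalues j : ℂ) * star (W i j))
      = (hA.eigenvalues i : ℂ) * (hB.eigenvalues j : ℂ) * (W i j * star (W i j)) by ring, h2]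

open Matrix Finset in
private theorem wh_core_ineq {m : ℕ} (lam mu a b : Fin m → ℝ) (S : Matrix (Fin m) (Fin m) ℝ)
    (hS : S ∈ doublyStochastic ℝ (Fin m))
    (pa pb : Equiv.Perm (Fin m)) (ha : ∀ i, a i = lam (pa i)) (hb : ∀ i, b i = mu (pb i))
    (hmono : Monovary a b) :
    ∑ i, ∑ j, lam i * mu j * S i j ≤ ∑ i, a i * b i := by
  obtain ⟨w, hw0, hw1, hwsum⟩ := exists_eq_sum_perm_of_mem_doublyStochastic hS
  have hterm : ∀ σ : Equiv.Perm (Fin m), ∑ i, lam i * mu (σ i) ≤ ∑ i, a i * b i := by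
    intro σ
    have h1 : ∑ i, lam i * mu (σ i) = ∑ i, a i * b ((pb⁻¹ * σ * pa) i) := by
      rw [← Equiv.sum_comp pa (fun i => lam i * mu (σ i))]
      refine Finset.sum_congr rfl fun i _ => ?_
      simp [ha, hb, Equiv.Perm.mul_apply]
    rw [h1]
    exact hmono.sum_mul_comp_perm_le_sum_mul
  have key : ∀ i, ∑ j, lam i * mu j * (∑ σ : Equiv.Perm (Fin m), w σ • σ.permMatrix ℝ) i j
      = ∑ σ : Equiv.Perm (Fin m), w σ * (lam i * mu (σ i)) := by
    intro i
    simp only [Matrix.sum_apply, Matrix.smul_apply, Equiv.Perm.permMatrix,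
      PEquiv.toMatrix_apply, Equiv.toPEquiv_apply, Option.mem_def, Option.some.injEq,
      smul_eq_mul, mul_ite, mul_one, mul_zero, Finset.mul_sum]
    rw [Finset.sum_comm]
    refine Finset.sum_congr rfl fun σ _ => ?_
    simp [mul_comm]
  calc ∑ i, ∑ j, lam i * mu j * S i j
      = ∑ σ : Equiv.Perm (Fin m), w σ * ∑ i, lam i * mu (σ i) := by
        rw [← hwsum]
        simp only [key]
        rw [Finset.sum_comm]
        simp [Finset.mul_sum]
    _ ≤ ∑ σ : Equiv.Perm (Fin m), w σ * ∑ i, a i * b i :=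
        Finset.sum_le_sum fun σ _ => mul_le_mul_of_nonneg_left (hterm σ) (hw0 σ)
    _ = ∑ i, a i * b i := by rw [← Finset.sum_mul, hw1, one_mul]

open Matrix Finset in
private theorem wh_doublyStochastic {m : ℕ} (W : Matrix (Fin m) (Fin m) ℂ)
    (hW : W ∈ Matrix.unitaryGroup (Fin m) ℂ) :
    (Matrix.of fun i j => ‖W i j‖ ^ 2) ∈ doublyStochastic ℝ (Fin m) := by
  have h1 : W * star W = 1 := Matrix.mem_unitaryGroup_iff.mp hW
  have h2 : star W * W = 1 := Matrix.mem_unitaryGroup_iff'.mp hW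
  rw [mem_doublyStochastic_iff_sum]
  refine ⟨fun i j => by simp only [Matrix.of_apply]; positivity, fun i => ?_, fun j => ?_⟩
  · have h4 := congrFun (congrFun h1 i) i
    rw [Matrix.mul_apply, Matrix.one_apply_eq] at h4
    have h3 : ((∑ j, ‖W i j‖ ^ 2 : ℝ) : ℂ) = 1 := by
      rw [Complex.ofReal_sum]
      calc (∑ j, ((‖W i j‖ ^ 2 : ℝ) : ℂ)) = ∑ j, W i j * star W j i := by
            refine Finset.sum_congr rfl fun j _ => ?_
            rw [Matrix.star_apply, RCLike.star_def, RCLike.mul_conj]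
            norm_cast
        _ = 1 := h4
    have h5 : ∀ j, (Matrix.of fun i j => ‖W i j‖ ^ 2) i j = ‖W i j‖ ^ 2 := fun j => rfl
    simp only [h5]
    exact_mod_cast h3
  · have h4 := congrFun (congrFun h2 j) j
    rw [Matrix.mul_apply, Matrix.one_apply_eq] at h4
    have h3 : ((∑ i, ‖W i j‖ ^ 2 : ℝ) : ℂ) = 1 := by
      rw [Complex.ofReal_sum]
      calc (∑ i, ((‖W i j‖ ^ 2 : ℝ) : ℂ)) = ∑ i, star W j i * W i j := by
            refine Finset.sum_congr rfl fun i _ => ?_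
            rw [Matrix.star_apply, RCLike.star_def, RCLike.conj_mul]
            norm_cast
        _ = 1 := h4
    have h5 : ∀ i, (Matrix.of fun i j => ‖W i j‖ ^ 2) i j = ‖W i j‖ ^ 2 := fun i => rfl
    simp only [h5]
    exact_mod_cast h3

open Matrix Finset in
private theorem wh_trace_sq {m : ℕ} (M : Matrix (Fin m) (Fin m) ℂ) :
    Matrix.trace (star M * M) = ((∑ i, ∑ j, ‖M i j‖ ^ 2 : ℝ) : ℂ) := by
  rw [Matrix.trace]
  calc ∑ j, (star M * M).diag j = ∑ j, ∑ i, ((‖M i j‖ ^ 2 : ℝ) : ℂ) := by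
        refine Finset.sum_congr rfl fun j _ => ?_
        rw [Matrix.diag_apply, Matrix.mul_apply]
        refine Finset.sum_congr rfl fun i _ => ?_
        rw [Matrix.star_apply, RCLike.star_def, RCLike.conj_mul]
        norm_cast
    _ = ((∑ i, ∑ j, ‖M i j‖ ^ 2 : ℝ) : ℂ) := by rw [Finset.sum_comm]; push_cast; rfl

open Matrix Finset in
/-- Wielandt–Hoffman inequality for Hermitian matrices:
for Hermitian `A, B` with decreasingly ordered eigenvalues `λᵢ(·)`,
`∑ᵢ (λᵢ(A) − λᵢ(B))² ≤ ‖A − B‖_F²`. -/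
theorem wielandt_hoffman
    {d : ℕ} (A B : Matrix (Fin (d + 1)) (Fin (d + 1)) ℂ)
    (hA : A.IsHermitian) (hB : B.IsHermitian) :
    ∑ i, (eigD A i - eigD B i) ^ 2 ≤ frobNorm (A - B) ^ 2 := by
  classical
  set lam := hA.eigenvalues with hlam
  set mu := hB.eigenvalues with hmu
  set U := (hA.eigenvectorUnitary : Matrix (Fin (d+1)) (Fin (d+1)) ℂ) with hUdef
  set V := (hB.eigenvectorUnitary : Matrix (Fin (d+1)) (Fin (d+1)) ℂ) with hVdef
  set W := star U * V with hWdef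
  have haA : eigD A = fun i => lam (Tuple.sort lam i.rev) := by rw [eigD, dif_pos hA]
  have haB : eigD B = fun i => mu (Tuple.sort mu i.rev) := by rw [eigD, dif_pos hB]
  set pa : Equiv.Perm (Fin (d+1)) := (Fin.revPerm).trans (Tuple.sort lam) with hpa
  set pb : Equiv.Perm (Fin (d+1)) := (Fin.revPerm).trans (Tuple.sort mu) with hpb
  have ha : ∀ i, eigD A i = lam (pa i) := fun i => by rw [haA]; rfl
  have hb : ∀ i, eigD B i = mu (pb i) := fun i => by rw [haB]; rfl
  have hmonoA : Antitone (eigD A) := by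
    intro i j hij
    rw [ha i, ha j]
    exact (Tuple.monotone_sort lam) (Fin.rev_le_rev.mpr hij)
  have hmonoB : Antitone (eigD B) := by
    intro i j hij
    rw [hb i, hb j]
    exact (Tuple.monotone_sort mu) (Fin.rev_le_rev.mpr hij)
  have hmono : Monovary (eigD A) (eigD B) := hmonoA.monovary hmonoB
  -- W is unitary
  have hU2 : star U * U = 1 := Matrix.mem_unitaryGroup_iff'.mp hA.eigenvectorUnitary.2
  have hV1 : V * star V = 1 := Matrix.mem_unitaryGroup_iff.mp hB.eigenvectorUnitary.2
  have hWu : W ∈ Matrix.unitaryGroup (Fin (d+1)) ℂ := by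
    rw [Matrix.mem_unitaryGroup_iff]
    calc W * star W = star U * (V * star V) * U := by
          simp only [hWdef, Matrix.star_mul, star_star, Matrix.mul_assoc]
      _ = 1 := by rw [hV1, Matrix.mul_one, hU2]
  have hS := wh_doublyStochastic W hWu
  have hcore : ∑ i, ∑ j, lam i * mu j * ‖W i j‖ ^ 2 ≤ ∑ i, eigD A i * eigD B i := by
    have := wh_core_ineq lam mu (eigD A) (eigD B) (Matrix.of fun i j => ‖W i j‖ ^ 2) hS
      pa pb ha hb hmono
    simpa using this
  -- real parts of traces
  have htr : (Matrix.trace (A * B)).re = ∑ i, ∑ j, lam i * mu j * ‖W i j‖ ^ 2 := by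
    rw [wh_trace_formula A B hA hB]
    exact Complex.ofReal_re _
  have hAA : (Matrix.trace (A * A)).re = ∑ i, lam i ^ 2 := by
    rw [wh_trace_formula A A hA hA, Complex.ofReal_re]
    rw [show star U * U = 1 from hU2]
    simp [Matrix.one_apply, apply_ite, mul_ite, sq]
    rfl
  have hBB : (Matrix.trace (B * B)).re = ∑ i, mu i ^ 2 := by
    rw [wh_trace_formula B B hB hB, Complex.ofReal_re]
    rw [show star V * V = 1 from Matrix.mem_unitaryGroup_iff'.mp hB.eigenvectorUnitary.2]
    simp [Matrix.one_apply, apply_ite, mul_ite, sq]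
    rfl
  -- Frobenius side
  have hfrob : frobNorm (A - B) ^ 2 = ∑ i, ∑ j, ‖(A - B) i j‖ ^ 2 := by
    rw [frobNorm]
    exact Real.sq_sqrt (Finset.sum_nonneg fun i _ => Finset.sum_nonneg fun j _ => by positivity)
  have hherm : star (A - B) = A - B := (hA.sub hB)
  have hMM : ((∑ i, ∑ j, ‖(A - B) i j‖ ^ 2 : ℝ) : ℂ) = Matrix.trace ((A - B) * (A - B)) := by
    rw [← wh_trace_sq (A - B), hherm]
  have hexp : Matrix.trace ((A - B) * (A - B))
      = Matrix.trace (A * A) - 2 * Matrix.trace (A * B) + Matrix.trace (B * B) := by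
    rw [Matrix.sub_mul, Matrix.mul_sub, Matrix.mul_sub, Matrix.trace_sub, Matrix.trace_sub,
      Matrix.trace_sub, Matrix.trace_mul_comm B A]
    ring
  have hre : ∑ i, ∑ j, ‖(A - B) i j‖ ^ 2
      = ∑ i, lam i ^ 2 + ∑ i, mu i ^ 2 - 2 * (Matrix.trace (A * B)).re := by
    have := congrArg Complex.re (hMM.trans hexp)
    rw [Complex.ofReal_re] at this
    rw [this]
    simp [Complex.sub_re, Complex.add_re, Complex.mul_re, hAA, hBB]
    ring
  -- eigenvalue sums
  have hsa : ∑ i, eigD A i ^ 2 = ∑ i, lam i ^ 2 := by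
    calc ∑ i, eigD A i ^ 2 = ∑ i, lam (pa i) ^ 2 :=
          Finset.sum_congr rfl fun i _ => by rw [ha i]
      _ = ∑ i, lam i ^ 2 := Equiv.sum_comp pa (fun i => lam i ^ 2)
  have hsb : ∑ i, eigD B i ^ 2 = ∑ i, mu i ^ 2 := by
    calc ∑ i, eigD B i ^ 2 = ∑ i, mu (pb i) ^ 2 :=
          Finset.sum_congr rfl fun i _ => by rw [hb i]
      _ = ∑ i, mu i ^ 2 := Equiv.sum_comp pb (fun i => mu i ^ 2)
  have expandL : ∑ i, (eigD A i - eigD B i) ^ 2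
      = ∑ i, eigD A i ^ 2 + ∑ i, eigD B i ^ 2 - 2 * ∑ i, eigD A i * eigD B i := by
    rw [← Finset.sum_add_distrib, Finset.mul_sum, ← Finset.sum_sub_distrib]
    exact Finset.sum_congr rfl fun i _ => by ring
  rw [expandL, hfrob, hre, hsa, hsb, htr]
  linarith [hcore]
end
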